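/- arXiv:1108.5904 — 6 statements merged into one kernel-verified Lean document; each statement's English description precedes it below -/
import Mathlib

section
/- For all positive integers k ≤ m there exists a (k,m)-selective family of size O(k · log(m/k)); precisely, there is an absolute constant C > 0 such that for all integers 1 ≤ k ≤ m there exists a family F of subsets of {1,…,m} with |F| ≤ C · k · (1 + Real.log (m / k)) such that for every nonempty subset S ⊆ {1,…,m} with |S| ≤ k there exists T ∈ F with |T ∩ S| = 1. -/
/-!
Sort the sets `S` by their dyadic scale `a = 2 ^ j ≤ #S ≤ 2 * a`. For one scale, colour the
ground set uniformly at random with `2 * a` colours and let `T` be the class of one colour: `T`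
meets `S` in exactly one point with probability `#S * (1 - 1/(2a)) ^ (#S - 1) / (2a) ≥ 1/8`.
So `n` independent colourings all fail on a given `S` with probability at most `(7/8) ^ n`, and a
union bound over the at most `2 ^ O(a log (m/a))` sets of that scale shows that
`n = O(a log (m/a))` colourings serve all of them. Summing over the scales `a ≤ k` gives
`O(k (1 + log (m/k)))` sets. Probabilities are replaced throughout by counts of colourings.
-/

open Finset
open scoped Nat

theorem Nat.succ_pow_le_four_mul_pow {b e : ℕ} (he : e ≤ b) : (b + 1) ^ e ≤ 4 * b ^ e := by
  rcases Nat.eq_zero_or_pos b with rfl | hb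
  · simp_all
  have hb' : (0 : ℝ) < b := by exact_mod_cast hb
  have h_exp : ((b + 1 : ℕ) : ℝ) ≤ b * Real.exp (1 / b) := by
    have := Real.add_one_le_exp (1 / (b : ℝ))
    rw [← div_le_iff₀' hb']
    push_cast
    field_simp at this ⊢
    linarith
  have h_exp_pow : Real.exp (1 / b) ^ e ≤ 4 := by
    rw [← Real.exp_nat_mul]
    calc Real.exp (e * (1 / b)) ≤ Real.exp 1 := by
          gcongr
          rw [mul_one_div, div_le_one hb']
          exact_mod_cast he
      _ ≤ 4 := by linarith [Real.exp_one_lt_three]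
  have : ((b + 1 : ℕ) : ℝ) ^ e ≤ 4 * (b : ℝ) ^ e :=
    calc ((b + 1 : ℕ) : ℝ) ^ e ≤ (b * Real.exp (1 / b)) ^ e := by gcongr
      _ = b ^ e * Real.exp (1 / b) ^ e := mul_pow _ _ _
      _ ≤ b ^ e * 4 := by gcongr
      _ = 4 * b ^ e := mul_comm _ _
  exact_mod_cast this

theorem Nat.pow_le_eight_mul_mul_pred_pow {r s : ℕ} (hs : 1 ≤ s) (hsr : s ≤ r)
    (hrs : r ≤ 2 * s) :
    r ^ s ≤ 8 * (s * (r - 1) ^ (s - 1)) := by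
  obtain ⟨r, rfl⟩ : ∃ r', r = r' + 1 := ⟨r - 1, by omega⟩
  obtain ⟨s, rfl⟩ : ∃ s', s = s' + 1 := ⟨s - 1, by omega⟩
  simp only [Nat.add_sub_cancel]
  calc (r + 1) ^ (s + 1) = (r + 1) * (r + 1) ^ s := by ring
    _ ≤ (2 * (s + 1)) * (4 * r ^ s) :=
        Nat.mul_le_mul hrs (Nat.succ_pow_le_four_mul_pow (by omega))
    _ = 8 * ((s + 1) * r ^ s) := by ring

theorem Nat.pow_self_le_four_pow_mul_factorial (s : ℕ) : s ^ s ≤ 4 ^ s * s ! := by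
  induction s with
  | zero => simp
  | succ s ih =>
    calc (s + 1) ^ (s + 1) = (s + 1) * (s + 1) ^ s := by ring
      _ ≤ (s + 1) * (4 * (4 ^ s * s !)) :=
          Nat.mul_le_mul_left _ ((Nat.succ_pow_le_four_mul_pow le_rfl).trans (by gcongr))
      _ = 4 ^ (s + 1) * (s + 1)! := by rw [Nat.factorial_succ]; ring

theorem Nat.pow_mul_choose_le {m a s : ℕ} (has : a ≤ s) (hs : s ≤ 2 * a) (ham : a ≤ m) :
    a ^ (2 * a) * m.choose s ≤ (4 * m) ^ (2 * a) := by
  have h_choose : s ! * m.choose s ≤ m ^ s := by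
    rw [← Nat.descFactorial_eq_factorial_mul_choose]
    exact Nat.descFactorial_le_pow m s
  have h_small : a ^ s * m.choose s ≤ (4 * m) ^ s :=
    calc a ^ s * m.choose s ≤ (4 ^ s * s !) * m.choose s :=
          Nat.mul_le_mul_right _ ((Nat.pow_le_pow_left has s).trans
            (Nat.pow_self_le_four_pow_mul_factorial s))
      _ ≤ 4 ^ s * m ^ s := by rw [mul_assoc]; exact Nat.mul_le_mul_left _ h_choose
      _ = (4 * m) ^ s := (mul_pow _ _ _).symm
  calc a ^ (2 * a) * m.choose s = a ^ (2 * a - s) * (a ^ s * m.choose s) := by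
        rw [← mul_assoc, ← pow_add, Nat.sub_add_cancel hs]
    _ ≤ (4 * m) ^ (2 * a - s) * (4 * m) ^ s :=
        Nat.mul_le_mul (Nat.pow_le_pow_left (by omega) _) h_small
    _ = (4 * m) ^ (2 * a) := by rw [← pow_add, Nat.sub_add_cancel hs]

theorem Nat.sum_range_two_pow_mul_add_sub_le (J c : ℕ) :
    ∑ j ∈ range (J + 1), 2 ^ j * (c + (J - j)) ≤ 2 ^ (J + 1) * (c + 1) := by
  induction J generalizing c with
  | zero => simp only [zero_add, sum_range_one, pow_zero, one_mul, pow_one]; omega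
  | succ J ih =>
    have h_shift : ∑ j ∈ range (J + 1), 2 ^ j * (c + (J + 1 - j)) =
        ∑ j ∈ range (J + 1), 2 ^ j * ((c + 1) + (J - j)) :=
      sum_congr rfl fun j hj => by rw [mem_range] at hj; congr 1; omega
    rw [sum_range_succ, h_shift]
    have := ih (c + 1)
    rw [Nat.sub_self, add_zero]
    calc _ ≤ 2 ^ (J + 1) * (c + 1 + 1) + 2 ^ (J + 1) * c := Nat.add_le_add_right this _
      _ = 2 ^ (J + 1 + 1) * (c + 1) := by ring

theorem Nat.succ_mul_pow_lt_of_le_log {m j : ℕ} (hj : j ≤ Nat.log 2 m) :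
    (2 ^ j + 1) * (4 * m) ^ (2 * 2 ^ j) <
      2 ^ (2 ^ (j + 1) * (Nat.log 2 m - j + 5)) * (2 ^ j) ^ (2 * 2 ^ j) := by
  obtain ⟨d, hd⟩ : ∃ d, Nat.log 2 m = j + d := ⟨Nat.log 2 m - j, by omega⟩
  have h_four_m : 4 * m < 2 ^ (j + d + 3) := by
    have := Nat.lt_pow_succ_log_self one_lt_two m
    rw [hd] at this
    simp only [pow_succ] at this ⊢
    omega
  have h_exp :
      2 ^ j + 1 + (j + d + 3) * (2 * 2 ^ j) ≤ 2 ^ (j + 1) * (d + 5) + j * (2 * 2 ^ j) := by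
    have : 1 ≤ 2 ^ j := Nat.one_le_two_pow
    rw [pow_succ]
    nlinarith
  calc (2 ^ j + 1) * (4 * m) ^ (2 * 2 ^ j)
      < 2 ^ (2 ^ j + 1) * (2 ^ (j + d + 3)) ^ (2 * 2 ^ j) :=
        Nat.mul_lt_mul_of_le_of_lt Nat.lt_two_pow_self.le
          (Nat.pow_lt_pow_left h_four_m (by positivity)) (by positivity)
    _ ≤ 2 ^ (2 ^ (j + 1) * (d + 5)) * (2 ^ j) ^ (2 * 2 ^ j) := by
        rw [← pow_mul, ← pow_add, ← pow_mul, ← pow_add]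
        exact Nat.pow_le_pow_right two_pos h_exp
    _ = _ := by rw [hd, Nat.add_sub_cancel_left]

theorem Nat.mul_seven_pow_lt_eight_pow {N t : ℕ} (h : N < 2 ^ t) :
    N * 7 ^ (6 * t) < 8 ^ (6 * t) :=
  calc N * 7 ^ (6 * t) < 2 ^ t * 7 ^ (6 * t) := Nat.mul_lt_mul_of_pos_right h (by positivity)
    _ = (2 * 7 ^ 6) ^ t := by rw [mul_pow, ← pow_mul, mul_comm 6 t]
    _ ≤ (8 ^ 6) ^ t := Nat.pow_le_pow_left (by norm_num) t
    _ = 8 ^ (6 * t) := by rw [← pow_mul, mul_comm 6 t]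

theorem Nat.cast_log_sub_log_le {k m : ℕ} (hk : 1 ≤ k) (hkm : k ≤ m) :
    ((Nat.log 2 m - Nat.log 2 k : ℕ) : ℝ) ≤ 1 + 2 * Real.log (m / k) := by
  set d := Nat.log 2 m - Nat.log 2 k
  have h_nat : k * 2 ^ d ≤ 2 * m := by
    have hk_lt := Nat.lt_pow_succ_log_self one_lt_two k
    have hm_ge := Nat.pow_log_le_self 2 (show m ≠ 0 by omega)
    have h_exp : Nat.log 2 k + 1 + d = Nat.log 2 m + 1 := by
      have := Nat.log_mono_right (b := 2) hkm; omega
    calc k * 2 ^ d ≤ 2 ^ (Nat.log 2 k + 1) * 2 ^ d := Nat.mul_le_mul_right _ hk_lt.le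
      _ = 2 * 2 ^ Nat.log 2 m := by rw [← pow_add, h_exp, pow_succ, mul_comm]
      _ ≤ 2 * m := Nat.mul_le_mul_left _ hm_ge
  have hk' : (0 : ℝ) < k := by exact_mod_cast hk
  have h_ratio : (1 : ℝ) ≤ m / k := by rw [one_le_div hk']; exact_mod_cast hkm
  have h_real : (2 : ℝ) ^ d ≤ 2 * (m / k) := by
    rw [mul_div_assoc', le_div_iff₀ hk', mul_comm]; exact_mod_cast h_nat
  have h_log := Real.log_le_log (by positivity) h_real
  rw [Real.log_pow, Real.log_mul two_ne_zero (by positivity)] at h_log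
  have h_log_nonneg := Real.log_nonneg h_ratio
  have h_log_two := Real.log_two_gt_d9
  nlinarith

theorem exists_forall_exists_of_card_filter_not_le {ι Ω : Type*} [Fintype Ω] [Nonempty Ω]
    (𝒮 : Finset ι) (P : ι → Ω → Prop) [∀ S, DecidablePred (P S)] {p q n : ℕ}
    (h_fail : ∀ S ∈ 𝒮, q * #{ω | ¬P S ω} ≤ p * Fintype.card Ω) (h𝒮 : #𝒮 * p ^ n < q ^ n) :
    ∃ ω : Fin n → Ω, ∀ S ∈ 𝒮, ∃ i, P S (ω i) := by
  classical
  let bad : ι → Finset (Fin n → Ω) := fun S => Fintype.piFinset fun _ => {ω | ¬P S ω}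
  have card_bad : ∀ S ∈ 𝒮, q ^ n * #(bad S) ≤ p ^ n * Fintype.card Ω ^ n := by
    intro S hS
    simp only [bad, Fintype.card_piFinset, prod_const, Finset.card_univ, Fintype.card_fin,
      ← mul_pow]
    exact Nat.pow_le_pow_left (h_fail S hS) n
  have card_union : #(𝒮.biUnion bad) < #(univ : Finset (Fin n → Ω)) := by
    rw [Finset.card_univ, Fintype.card_fun, Fintype.card_fin]
    refine lt_of_mul_lt_mul_left (a := q ^ n) ?_ (Nat.zero_le _)
    calc q ^ n * #(𝒮.biUnion bad) ≤ ∑ S ∈ 𝒮, q ^ n * #(bad S) := by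
          rw [← mul_sum]; exact Nat.mul_le_mul_left _ card_biUnion_le
      _ ≤ #𝒮 * (p ^ n * Fintype.card Ω ^ n) := by
          simpa using sum_le_sum card_bad
      _ < q ^ n * Fintype.card Ω ^ n := by
          rw [← mul_assoc]
          exact Nat.mul_lt_mul_of_pos_right h𝒮 (by positivity)
  obtain ⟨ω, -, hω⟩ := exists_mem_notMem_of_card_lt_card card_union
  refine ⟨ω, fun S hS => ?_⟩
  have : ω ∉ bad S := fun h => hω (mem_biUnion.2 ⟨S, hS, h⟩)
  simpa [bad] using this

section Colorings

variable {α β : Type*} [Fintype α] [DecidableEq α] [Fintype β] [DecidableEq β]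

theorem le_card_isolating_colorings (z : β) (S : Finset α) :
    #S * ((Fintype.card β - 1) ^ (#S - 1) * Fintype.card β ^ (Fintype.card α - #S)) ≤
      #{g : α → β | #{x ∈ S | g x = z} = 1} := by
  let G : α → Finset (α → β) := fun x =>
    Fintype.piFinset fun y => if y = x then {z} else if y ∈ S then {z}ᶜ else univ
  have mem_G : ∀ x ∈ S, ∀ g, g ∈ G x ↔ g x = z ∧ ∀ y ∈ S, y ≠ x → g y ≠ z := by
    intro x hx g
    simp only [G, Fintype.mem_piFinset]
    constructor
    · intro h
      refine ⟨by simpa using h x, fun y hy hyx => ?_⟩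
      simpa [hyx, hy] using h y
    · rintro ⟨hgx, hg⟩ y
      by_cases hyx : y = x
      · simp [hyx, hgx]
      · by_cases hy : y ∈ S <;> simp [hyx, hy, hg]
  have card_G : ∀ x ∈ S,
      #(G x) = (Fintype.card β - 1) ^ (#S - 1) * Fintype.card β ^ (Fintype.card α - #S) := by
    intro x hx
    simp only [G, Fintype.card_piFinset, apply_ite Finset.card, card_singleton, card_compl,
      Finset.card_univ]
    rw [← prod_mul_prod_compl S, ← mul_prod_erase S _ hx, if_pos rfl, one_mul,
      prod_eq_pow_card fun y hy => by
        rw [if_neg (ne_of_mem_erase hy), if_pos (mem_of_mem_erase hy)],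
      prod_eq_pow_card fun y hy => by
        rw [if_neg (ne_of_mem_of_not_mem hx (mem_compl.1 hy)).symm, if_neg (mem_compl.1 hy)],
      card_erase_of_mem hx, card_compl]
  have G_disjoint : (S : Set α).PairwiseDisjoint G := by
    intro x hx y hy hxy
    refine disjoint_left.2 fun g hgx hgy => ?_
    exact ((mem_G y hy g).1 hgy).2 x hx hxy ((mem_G x hx g).1 hgx).1
  calc #S * ((Fintype.card β - 1) ^ (#S - 1) * Fintype.card β ^ (Fintype.card α - #S))
      = #(S.biUnion G) := by
        rw [card_biUnion G_disjoint, sum_congr rfl card_G, sum_const, smul_eq_mul]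
    _ ≤ _ := by
        refine card_le_card fun g hg => ?_
        obtain ⟨x, hx, hgx⟩ := mem_biUnion.1 hg
        rw [mem_G x hx] at hgx
        rw [mem_filter, card_eq_one]
        refine ⟨mem_univ _, x, eq_singleton_iff_unique_mem.2 ⟨mem_filter.2 ⟨hx, hgx.1⟩, ?_⟩⟩
        intro y hy
        rw [mem_filter] at hy
        by_contra hyx
        exact hgx.2 y hy.1 hyx hy.2

theorem eight_mul_card_not_isolating_colorings_le (z : β) {S : Finset α}
    (hSβ : #S ≤ Fintype.card β) (hβS : Fintype.card β ≤ 2 * #S) :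
    8 * #{g : α → β | #{x ∈ S | g x = z} ≠ 1} ≤ 7 * Fintype.card β ^ Fintype.card α := by
  have hS : 1 ≤ #S := by have := Fintype.card_pos_iff.2 ⟨z⟩; omega
  have h_split := card_filter_add_card_filter_not (s := (univ : Finset (α → β)))
    (fun g => #{x ∈ S | g x = z} = 1)
  rw [Finset.card_univ, Fintype.card_fun] at h_split
  have h_good := le_card_isolating_colorings z S
  have h_pow : Fintype.card β ^ Fintype.card α ≤
      8 * (#S * ((Fintype.card β - 1) ^ (#S - 1) * Fintype.card β ^ (Fintype.card α - #S))) :=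
    calc Fintype.card β ^ Fintype.card α
        = Fintype.card β ^ #S * Fintype.card β ^ (Fintype.card α - #S) := by
          rw [← pow_add, Nat.add_sub_cancel' (card_le_univ S)]
      _ ≤ 8 * (#S * (Fintype.card β - 1) ^ (#S - 1)) * Fintype.card β ^ (Fintype.card α - #S) :=
          Nat.mul_le_mul_right _ (Nat.pow_le_eight_mul_mul_pred_pow hS hSβ hβS)
      _ = _ := by ring
  simp only [ne_eq]
  omega

end Colorings

def IsSelective {α : Type*} [DecidableEq α] (k : ℕ) (F : Finset (Finset α)) : Prop :=
  ∀ S : Finset α, S.Nonempty → #S ≤ k → ∃ T ∈ F, #(T ∩ S) = 1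

section Selective

variable {α : Type*} [Fintype α] [DecidableEq α]

theorem exists_isolating_family {a n : ℕ} (ha : 1 ≤ a)
    (hn : #{S : Finset α | a ≤ #S ∧ #S ≤ 2 * a} * 7 ^ n < 8 ^ n) :
    ∃ F : Finset (Finset α), #F ≤ n ∧
      ∀ S : Finset α, a ≤ #S → #S ≤ 2 * a → ∃ T ∈ F, #(T ∩ S) = 1 := by
  have : NeZero (2 * a) := ⟨by omega⟩
  obtain ⟨ω, hω⟩ := exists_forall_exists_of_card_filter_not_le (Ω := α → Fin (2 * a)) _
    (fun S g => #{x ∈ S | g x = 0} = 1) (p := 7) (q := 8) (fun S hS => by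
      rw [mem_filter] at hS
      simpa using eight_mul_card_not_isolating_colorings_le (0 : Fin (2 * a))
        (by simpa using hS.2.2) (by simpa using hS.2.1)) hn
  refine ⟨univ.image fun i => ({x | ω i x = 0} : Finset α), card_image_le.trans (by simp),
    fun S h₁ h₂ => ?_⟩
  obtain ⟨i, hi⟩ := hω S (by simp [h₁, h₂])
  exact ⟨_, mem_image_of_mem _ (mem_univ i), by rwa [filter_inter, univ_inter]⟩

theorem card_subsets_card_between_mul_pow_le {a : ℕ} (ha : a ≤ Fintype.card α) :
    #{S : Finset α | a ≤ #S ∧ #S ≤ 2 * a} * a ^ (2 * a) ≤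
      (a + 1) * (4 * Fintype.card α) ^ (2 * a) := by
  have h_sub : ({S : Finset α | a ≤ #S ∧ #S ≤ 2 * a} : Finset (Finset α)) ⊆
      (Icc a (2 * a)).biUnion fun s => powersetCard s univ := fun S hS => by
    simp only [mem_filter, mem_univ, true_and] at hS
    simp [hS.1, hS.2]
  calc #{S : Finset α | a ≤ #S ∧ #S ≤ 2 * a} * a ^ (2 * a)
      ≤ (∑ s ∈ Icc a (2 * a), (Fintype.card α).choose s) * a ^ (2 * a) := by
        refine Nat.mul_le_mul_right _ ((card_le_card h_sub).trans (card_biUnion_le.trans ?_))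
        simp [card_powersetCard]
    _ ≤ ∑ s ∈ Icc a (2 * a), (4 * Fintype.card α) ^ (2 * a) := by
        rw [sum_mul]
        refine sum_le_sum fun s hs => ?_
        rw [mem_Icc] at hs
        rw [mul_comm]
        exact Nat.pow_mul_choose_le hs.1 hs.2 ha
    _ = (a + 1) * (4 * Fintype.card α) ^ (2 * a) := by
        rw [sum_const, Nat.card_Icc, smul_eq_mul]
        congr 1
        omega

theorem card_dyadic_class_lt [Nonempty α] {j : ℕ} (hj : j ≤ Nat.log 2 (Fintype.card α)) :
    #{S : Finset α | 2 ^ j ≤ #S ∧ #S ≤ 2 * 2 ^ j} <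
      2 ^ (2 ^ (j + 1) * (Nat.log 2 (Fintype.card α) - j + 5)) := by
  have hm : Fintype.card α ≠ 0 := Fintype.card_ne_zero
  have ham : 2 ^ j ≤ Fintype.card α :=
    (Nat.pow_le_pow_right two_pos hj).trans (Nat.pow_log_le_self 2 hm)
  exact lt_of_mul_lt_mul_right ((card_subsets_card_between_mul_pow_le ham).trans_lt
    (Nat.succ_mul_pow_lt_of_le_log hj)) (Nat.zero_le _)

theorem exists_isSelective_card_le {k : ℕ} (hk : 1 ≤ k) (hkα : k ≤ Fintype.card α) :
    ∃ F : Finset (Finset α), IsSelective k F ∧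
      #F ≤ 24 * k * (Nat.log 2 (Fintype.card α) - Nat.log 2 k + 6) := by
  have : Nonempty α := Fintype.card_pos_iff.1 (by omega)
  set L := Nat.log 2 (Fintype.card α)
  set J := Nat.log 2 k
  have hJL : J ≤ L := Nat.log_mono_right hkα
  have h_class : ∀ j ≤ J, ∃ F : Finset (Finset α),
      #F ≤ 12 * (2 ^ j * ((L - J + 5) + (J - j))) ∧
      ∀ S : Finset α, 2 ^ j ≤ #S → #S ≤ 2 * 2 ^ j → ∃ T ∈ F, #(T ∩ S) = 1 := by
    intro j hj
    obtain ⟨F, hF_card, hF_sel⟩ := exists_isolating_family Nat.one_le_two_pow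
      (Nat.mul_seven_pow_lt_eight_pow (card_dyadic_class_lt (hj.trans hJL)))
    refine ⟨F, hF_card.trans_eq ?_, hF_sel⟩
    rw [show L - j + 5 = L - J + 5 + (J - j) by omega, pow_succ]
    ring
  choose! F hF_card hF_sel using h_class
  refine ⟨(range (J + 1)).biUnion F, fun S hS hSk => ?_, ?_⟩
  · have hS₀ : #S ≠ 0 := card_ne_zero.2 hS
    obtain ⟨T, hT, hTS⟩ := hF_sel (Nat.log 2 #S) (Nat.log_mono_right hSk) S
      (Nat.pow_log_le_self 2 hS₀) (by simpa [pow_succ, mul_comm] using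
        (Nat.lt_pow_succ_log_self one_lt_two #S).le)
    exact ⟨T, mem_biUnion.2 ⟨_, mem_range.2 (Nat.lt_succ_of_le (Nat.log_mono_right hSk)), hT⟩,
      hTS⟩
  · calc #((range (J + 1)).biUnion F) ≤ ∑ j ∈ range (J + 1), #(F j) := card_biUnion_le
      _ ≤ 12 * ∑ j ∈ range (J + 1), 2 ^ j * ((L - J + 5) + (J - j)) := by
          rw [mul_sum]
          exact sum_le_sum fun j hj => hF_card j (Nat.le_of_lt_succ (mem_range.1 hj))
      _ ≤ 12 * (2 ^ (J + 1) * (L - J + 5 + 1)) :=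
          Nat.mul_le_mul_left _ (Nat.sum_range_two_pow_mul_add_sub_le J _)
      _ ≤ 24 * k * (L - J + 6) := by
          have : 2 ^ J ≤ k := Nat.pow_log_le_self 2 (by omega)
          rw [pow_succ]
          nlinarith

end Selective

theorem IsSelective.exists_inter_map_subtype {β : Type*} [DecidableEq β] {s : Finset β}
    {k : ℕ} {F : Finset (Finset s)} (hF : IsSelective k F) {S : Finset β} (hS : S ⊆ s)
    (hne : S.Nonempty) (hk : #S ≤ k) :
    ∃ T ∈ F.image (map (Function.Embedding.subtype (· ∈ s))), #(T ∩ S) = 1 := by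
  have h_map : (S.subtype (· ∈ s)).map (Function.Embedding.subtype _) = S :=
    subtype_map_of_mem hS
  have h_card : #(S.subtype (· ∈ s)) = #S := by rw [← card_map, h_map]
  obtain ⟨T, hT, hTS⟩ := hF (S.subtype (· ∈ s)) (card_pos.1 (h_card ▸ hne.card_pos))
    (h_card.trans_le hk)
  exact ⟨_, mem_image_of_mem _ hT, by rw [← h_map, ← map_inter, card_map, hTS]⟩

/-- There is an absolute constant `C > 0` such that for all integers `1 ≤ k ≤ m`
there exists a `(k,m)`-selective family `F` of subsets of `{1,…,m}` with
`|F| ≤ C·k·(1 + log (m/k))`: for every nonempty `S ⊆ {1,…,m}` with `|S| ≤ k`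
there is `T ∈ F` with `|T ∩ S| = 1`. -/
theorem selective_family_exists :
    ∃ C : ℝ, 0 < C ∧
      ∀ k m : ℕ, 1 ≤ k → k ≤ m →
        ∃ F : Finset (Finset ℕ),
          (∀ T ∈ F, T ⊆ Finset.Icc 1 m) ∧
          (F.card : ℝ) ≤ C * k * (1 + Real.log ((m : ℝ) / (k : ℝ))) ∧
          (∀ S : Finset ℕ, S ⊆ Finset.Icc 1 m → S.Nonempty → S.card ≤ k →
            ∃ T ∈ F, (T ∩ S).card = 1) := by
  refine ⟨168, by norm_num, fun k m hk hkm => ?_⟩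
  obtain ⟨F, hF_sel, hF_card⟩ :=
    exists_isSelective_card_le (α := Icc 1 m) hk (by simpa using hkm)
  refine ⟨F.image (map (Function.Embedding.subtype _)), ?_, ?_,
    fun S hS hne hSk => hF_sel.exists_inter_map_subtype hS hne hSk⟩
  · intro T hT x hx
    obtain ⟨T', -, rfl⟩ := mem_image.1 hT
    obtain ⟨y, -, rfl⟩ := mem_map.1 hx
    exact y.2
  · have h_card : (#(F.image (map (Function.Embedding.subtype _))) : ℝ) ≤
        24 * k * ((Nat.log 2 m - Nat.log 2 k : ℕ) + 6) := by
      have : #(F.image (map (Function.Embedding.subtype _))) ≤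
          24 * k * (Nat.log 2 m - Nat.log 2 k + 6) :=
        card_image_le.trans (by simpa using hF_card)
      exact_mod_cast this
    have h_log := Nat.cast_log_sub_log_le hk hkm
    have h_log_nonneg : 0 ≤ Real.log (m / k) :=
      Real.log_nonneg ((one_le_div (by positivity)).2 (by exact_mod_cast hkm))
    nlinarith
end

section
/- For all positive integers k ≤ m there exists a (k,m)-strongly selective family of size O(k² · log(m/k)); precisely, there is an absolute constant C > 0 such that for all integers 1 ≤ k ≤ m there exists a family F of subsets of {1,…,m} with |F| ≤ C · k² · (1 + Real.log (m / k)) such that for every subset S ⊆ {1,…,m} with |S| ≤ k and every element z ∈ S there exists T ∈ F with T ∩ S = {z}. -/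
open Finset Fintype

/-!
Hash `{1,…,m}` into `2k` buckets by `N ≈ (k + 1) log₂ m` independent uniformly random
functions and take all buckets as the family. For fixed `S` of size `k` and `z ∈ S`, a single
function collides `z` with some other point of `S` with probability at most `(k - 1)/(2k) < 1/2`,
so all `N` functions fail with probability below `2^{-N} < m^{-(k+1)}`; a union bound over the
at most `m^{k+1}` pairs `(S, z)` leaves a good choice of functions. The family then has
`2kN = O(k² log m)` members, which is `O(k² log (m/k))` once `k² < m`; for `m ≤ k²`
the singletons already suffice.
-/

section Isolation

variable {α β : Type*}

def Isolates (h : α → β) (S : Finset α) (z : α) : Prop :=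
  ∀ s ∈ S, h s = h z → s = z

instance [DecidableEq α] [DecidableEq β] (h : α → β) (S : Finset α) (z : α) :
    Decidable (Isolates h S z) := by
  unfold Isolates; infer_instance

theorem Isolates.mono {h : α → β} {S S' : Finset α} {z : α} (hSS' : S ⊆ S')
    (hS' : Isolates h S' z) : Isolates h S z :=
  fun s hs => hS' s (hSS' hs)

variable [Fintype α] [DecidableEq α] [Fintype β] [DecidableEq β]

theorem card_filter_apply_eq_apply {s z : α} (hsz : s ≠ z) :
    #{h : α → β | h s = h z} = card β ^ (card α - 1) := by
  rw [← Fintype.card_subtype]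
  let e : {h : α → β // h s = h z} ≃ ({t : α // t ≠ s} → β) :=
    { toFun := fun h t => h.1 t
      invFun := fun f => ⟨fun t => if ht : t = s then f ⟨z, hsz.symm⟩ else f ⟨t, ht⟩, by
        simp [hsz.symm]⟩
      left_inv := fun h => by
        ext t
        by_cases ht : t = s
        · subst ht; simp [h.2]
        · simp [ht]
      right_inv := fun f => by
        ext t
        simp [t.2] }
  rw [Fintype.card_congr e, Fintype.card_fun, Fintype.card_subtype_compl,
    Fintype.card_subtype_eq]

theorem card_filter_not_isolates_le (S : Finset α) (z : α) :
    #{h : α → β | ¬Isolates h S z} ≤ #(S.erase z) * card β ^ (card α - 1) := by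
  have hcover : ({h : α → β | ¬Isolates h S z} : Finset _) ⊆
      (S.erase z).biUnion fun s => {h : α → β | h s = h z} := by
    intro h hh
    simp only [Isolates, mem_filter, mem_univ, true_and, not_forall] at hh
    obtain ⟨s, hs, hhs, hsz⟩ := hh
    exact mem_biUnion.2 ⟨s, mem_erase.2 ⟨hsz, hs⟩, by simpa using hhs⟩
  refine (card_le_card hcover).trans (card_biUnion_le_card_mul _ _ _ fun s hs => ?_)
  exact (card_filter_apply_eq_apply (mem_erase.1 hs).1).le

end Isolation

theorem exists_forall_notMem_of_sum_card_lt {ι X : Type*} [Fintype X] [DecidableEq X]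
    (I : Finset ι) (B : ι → Finset X) (h : ∑ i ∈ I, #(B i) < card X) :
    ∃ x, ∀ i ∈ I, x ∉ B i := by
  obtain ⟨x, -, hx⟩ := exists_mem_notMem_of_card_lt_card
    (card_biUnion_le.trans_lt (h.trans_eq card_univ.symm))
  exact ⟨x, fun i hi hxi => hx (mem_biUnion.2 ⟨i, hi, hxi⟩)⟩

theorem pow_succ_lt_two_pow_mul_log_succ (n k : ℕ) :
    n ^ (k + 1) < 2 ^ ((k + 1) * (Nat.log 2 n + 1)) := by
  rw [pow_mul']
  exact Nat.pow_lt_pow_left (Nat.lt_pow_succ_log_self one_lt_two n) k.succ_ne_zero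

theorem exists_isolating_hash_family {α : Type*} [Fintype α] [DecidableEq α] {k : ℕ}
    (hk : 0 < k) (hkα : k ≤ card α) :
    ∃ g : Fin ((k + 1) * (Nat.log 2 (card α) + 1)) → α → Fin (2 * k),
      ∀ S : Finset α, #S ≤ k → ∀ z ∈ S, ∃ i, Isolates (g i) S z := by
  set n := card α
  set N := (k + 1) * (Nat.log 2 n + 1)
  -- `fail` bounds the functions not isolating a point of a `k`-set: half of all `(2k)^n`.
  have hhalf : 2 * (k * (2 * k) ^ (n - 1)) = (2 * k) ^ n := by
    rw [← mul_assoc, ← pow_succ', Nat.sub_add_cancel (hk.trans_le hkα)]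
  set fail := k * (2 * k) ^ (n - 1)
  let bad : Finset α × α → Finset (Fin N → α → Fin (2 * k)) := fun p =>
    piFinset fun _ => {h | ¬Isolates h p.1 p.2}
  have hbad : ∀ p ∈ powersetCard k univ ×ˢ univ, #(bad p) ≤ fail ^ N := by
    rintro ⟨S, z⟩ hp
    have hS : #S = k := (mem_powersetCard.1 (mem_product.1 hp).1).2
    rw [card_piFinset_const]
    refine Nat.pow_le_pow_left ((card_filter_not_isolates_le S z).trans ?_) N
    rw [Fintype.card_fin]
    exact Nat.mul_le_mul_right _ (hS ▸ card_erase_le)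
  obtain ⟨g, hg⟩ := exists_forall_notMem_of_sum_card_lt (powersetCard k univ ×ˢ univ) bad <|
    calc ∑ p ∈ powersetCard k univ ×ˢ univ, #(bad p)
        ≤ #(powersetCard k (univ : Finset α) ×ˢ (univ : Finset α)) * fail ^ N :=
          sum_le_card_nsmul _ _ _ hbad
      _ ≤ n ^ (k + 1) * fail ^ N := by
          rw [card_product, card_powersetCard, card_univ, pow_succ]
          exact Nat.mul_le_mul_right _ (Nat.mul_le_mul_right _ (Nat.choose_le_pow n k))
      _ < 2 ^ N * fail ^ N :=
          Nat.mul_lt_mul_of_pos_right (pow_succ_lt_two_pow_mul_log_succ n k) (by positivity)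
      _ = card (Fin N → α → Fin (2 * k)) := by
          rw [← mul_pow, hhalf]
          simp [n]
  refine ⟨g, fun S hS z hz => ?_⟩
  obtain ⟨S', hSS', hS'⟩ := exists_superset_card_eq hS hkα
  have hgood := hg (S', z) (by simp [hS'])
  simp only [bad, Fintype.mem_piFinset, mem_filter, mem_univ, true_and, not_forall,
    not_not] at hgood
  obtain ⟨i, hi⟩ := hgood
  exact ⟨i, hi.mono hSS'⟩

section StronglySelective

variable {α : Type*} [DecidableEq α]

def IsStronglySelective (k : ℕ) (U : Finset α) (F : Finset (Finset α)) : Prop :=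
  (∀ T ∈ F, T ⊆ U) ∧ ∀ S ⊆ U, #S ≤ k → ∀ z ∈ S, ∃ T ∈ F, T ∩ S = {z}

theorem isStronglySelective_singletons (k : ℕ) (U : Finset α) :
    IsStronglySelective k U (U.image singleton) := by
  refine ⟨fun T hT => ?_, fun S hSU _ z hz => ⟨{z}, mem_image_of_mem _ (hSU hz), ?_⟩⟩
  · obtain ⟨x, hx, rfl⟩ := mem_image.1 hT
    exact singleton_subset_iff.2 hx
  · exact singleton_inter_of_mem hz

theorem IsStronglySelective.map {β : Type*} [DecidableEq β] {k : ℕ} {U : Finset α}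
    {F : Finset (Finset α)} (hF : IsStronglySelective k U F) (f : α ↪ β) :
    IsStronglySelective k (U.map f) (F.image (map f)) := by
  refine ⟨fun T hT => ?_, fun S hSU hS z hz => ?_⟩
  · obtain ⟨T, hT', rfl⟩ := mem_image.1 hT
    exact map_subset_map.2 (hF.1 T hT')
  · obtain ⟨S, hSU', rfl⟩ := subset_map_iff.1 hSU
    obtain ⟨z, hz', rfl⟩ := mem_map.1 hz
    obtain ⟨T, hT, hTS⟩ := hF.2 S hSU' (by simpa using hS) z hz'
    exact ⟨T.map f, mem_image_of_mem _ hT, by rw [← map_inter, hTS, map_singleton]⟩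

theorem isStronglySelective_fibers [Fintype α] {ι β : Type*} [Fintype ι] [Fintype β]
    [DecidableEq β] {k : ℕ} (g : ι → α → β)
    (hg : ∀ S : Finset α, #S ≤ k → ∀ z ∈ S, ∃ i, Isolates (g i) S z) :
    IsStronglySelective k univ
      (univ.image fun p : ι × β => ({x | g p.1 x = p.2} : Finset α)) := by
  refine ⟨fun _ _ => subset_univ _, fun S _ hS z hz => ?_⟩
  obtain ⟨i, hi⟩ := hg S hS z hz
  refine ⟨_, mem_image_of_mem _ (mem_univ (i, g i z)), ?_⟩
  ext x
  simp only [mem_inter, mem_filter, mem_univ, true_and, mem_singleton]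
  exact ⟨fun hx => hi x hx.2 hx.1, by rintro rfl; exact ⟨rfl, hz⟩⟩

theorem exists_isStronglySelective_univ_card_le [Fintype α] {k : ℕ} (hk : 0 < k)
    (hkα : k ≤ card α) :
    ∃ F, IsStronglySelective k (univ : Finset α) F ∧
      #F ≤ 2 * k * (k + 1) * (Nat.log 2 (card α) + 1) := by
  obtain ⟨g, hg⟩ := exists_isolating_hash_family hk hkα
  refine ⟨_, isStronglySelective_fibers g hg, card_image_le.trans_eq ?_⟩
  rw [card_univ, Fintype.card_prod, Fintype.card_fin, Fintype.card_fin]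
  ring

end StronglySelective

theorem exists_isStronglySelective_Icc_card_le {k m : ℕ} (hk : 0 < k) (hkm : k ≤ m) :
    ∃ F, IsStronglySelective k (Icc 1 m) F ∧ #F ≤ 2 * k * (k + 1) * (Nat.log 2 m + 1) := by
  have hcard : Fintype.card (Icc 1 m) = m := by simp
  obtain ⟨F, hF, hFcard⟩ :=
    exists_isStronglySelective_univ_card_le (α := Icc 1 m) hk (hcard.symm ▸ hkm)
  refine ⟨_, by simpa [attach_map_val] using hF.map (Function.Embedding.subtype _), ?_⟩
  rw [hcard] at hFcard
  exact card_image_le.trans hFcard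

theorem natLog_two_le_four_mul_log_div {k m : ℕ} (hk : 0 < k) (hkm : k ^ 2 ≤ m) :
    (Nat.log 2 m : ℝ) ≤ 4 * Real.log (m / k) := by
  have hk' : (0 : ℝ) < k := by exact_mod_cast hk
  have hm : (0 : ℝ) < m := Nat.cast_pos.2 ((pow_pos hk 2).trans_le hkm)
  have hlog2 : 1 / 2 < Real.log 2 := by linarith [Real.log_two_gt_d9]
  have hlogm : Real.log m / Real.log 2 ≤ 2 * Real.log m := by
    rw [div_le_iff₀ (by linarith)]
    nlinarith [Real.log_nonneg (show (1 : ℝ) ≤ m by exact_mod_cast hm)]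
  have hlogk : 2 * Real.log k ≤ Real.log m := by
    have := Real.log_le_log (by positivity) (show (k : ℝ) ^ 2 ≤ m by exact_mod_cast hkm)
    rwa [Real.log_pow, Nat.cast_ofNat] at this
  calc (Nat.log 2 m : ℝ) ≤ Real.logb 2 m := by exact_mod_cast Real.natLog_le_logb m 2
    _ ≤ 2 * Real.log m := hlogm
    _ ≤ 4 * Real.log (m / k) := by rw [Real.log_div hm.ne' hk'.ne']; linarith

/-- There is an absolute constant `C > 0` such that for all integers `1 ≤ k ≤ m`
there exists a `(k,m)`-strongly selective family `F` of subsets of `{1,…,m}` with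
`|F| ≤ C·k²·(1 + log (m/k))`: for every `S ⊆ {1,…,m}` with `|S| ≤ k` and every
`z ∈ S` there is `T ∈ F` with `T ∩ S = {z}`. -/
theorem strongly_selective_family_exists :
    ∃ C : ℝ, 0 < C ∧
      ∀ k m : ℕ, 1 ≤ k → k ≤ m →
        ∃ F : Finset (Finset ℕ),
          (∀ T ∈ F, T ⊆ Finset.Icc 1 m) ∧
          (F.card : ℝ) ≤ C * (k : ℝ) ^ 2 * (1 + Real.log ((m : ℝ) / (k : ℝ))) ∧
          (∀ S : Finset ℕ, S ⊆ Finset.Icc 1 m → S.card ≤ k →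
            ∀ z ∈ S, ∃ T ∈ F, T ∩ S = {z}) := by
  refine ⟨16, by norm_num, fun k m hk hkm => ?_⟩
  have hk' : (1 : ℝ) ≤ k := by exact_mod_cast hk
  have hlog : 0 ≤ Real.log ((m : ℝ) / k) :=
    Real.log_nonneg ((one_le_div (by positivity)).2 (by exact_mod_cast hkm))
  obtain ⟨F, hF, hcard⟩ : ∃ F, IsStronglySelective k (Icc 1 m) F ∧
      (#F : ℝ) ≤ 16 * (k : ℝ) ^ 2 * (1 + Real.log ((m : ℝ) / k)) := by
    rcases le_or_gt m (k ^ 2) with hsmall | hlarge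
    · refine ⟨_, isStronglySelective_singletons k _, ?_⟩
      have hcard : (#((Icc 1 m).image (singleton : ℕ → Finset ℕ)) : ℝ) ≤ k ^ 2 := by
        exact_mod_cast card_image_le.trans (by simpa using hsmall)
      nlinarith
    · obtain ⟨F, hF, hcard⟩ := exists_isStronglySelective_Icc_card_le hk hkm
      refine ⟨F, hF, ?_⟩
      calc (#F : ℝ) ≤ 2 * k * (k + 1) * (Nat.log 2 m + 1) := by exact_mod_cast hcard
        _ ≤ 2 * k * (2 * k) * (4 * Real.log ((m : ℝ) / k) + 1) := by
            gcongr
            · linarith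
            · exact natLog_two_le_four_mul_log_div hk hlarge.le
        _ ≤ 16 * (k : ℝ) ^ 2 * (1 + Real.log ((m : ℝ) / k)) := by nlinarith
  exact ⟨F, hF.1, hcard, hF.2⟩
end

section
/- Existence of Selecting-Colliding families: fix an integer c ≥ 2. There exists a constant D > 0 (depending only on c) such that for every integer l > 3 there exists a family F of subsets of {1,…,l^c} with |F| ≤ D · l² · Real.log l having the following property: for all disjoint subsets N_k, N_uk of {1,…,l^c} with |N_k| < l, N_uk nonempty, and such that N_k is nonempty whenever |N_uk| ≥ l, there exists S ∈ F satisfying at least one of (Condition A) |S ∩ N_uk| = 1 and S ∩ N_k = ∅, or (Condition B) |S ∩ N_k| = 1 and |S ∩ N_uk| ≥ 1. -/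
/-!
Probabilistic method. Colour every element of `α` independently and uniformly with one of `4l`
colours and let `S` be the class of colour `0`, so each element lies in `S` with probability
`1 / (4l)`. For a pattern `(Nk, B)` with `#Nk, #B ≤ l`, the set `S` meets `Nk ∪ B` in a single
point of `B` (hence selects) with probability `≥ 1 / (8l)`, and, when `#B = l`, meets `Nk` in
a single point and `B` somewhere (hence collides) with probability `≥ 1 / (40l)`. Collision is
monotone in the unknown set, so a large `Nuk` is replaced by an `l`-subset. There are at most
`(|α| + 1)^(2l)` patterns, so `t` independent samples all miss some pattern with probability at
most `(|α| + 1)^(2l) · e^(-t/(40l)) < 1` once `t ≈ 80 (c + 1) l² log l` for `|α| = l^c`.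
-/

open Finset

namespace SelectingColliding

section Events

variable {α : Type*} [DecidableEq α]

def Selects (S Nk Nuk : Finset α) : Prop := #(S ∩ Nuk) = 1 ∧ S ∩ Nk = ∅

def Collides (S Nk Nuk : Finset α) : Prop := #(S ∩ Nk) = 1 ∧ 1 ≤ #(S ∩ Nuk)

instance (S Nk Nuk : Finset α) : Decidable (Selects S Nk Nuk) :=
  inferInstanceAs (Decidable (_ ∧ _))

instance (S Nk Nuk : Finset α) : Decidable (Collides S Nk Nuk) :=
  inferInstanceAs (Decidable (_ ∧ _))

theorem Collides.mono_right {S Nk B Nuk : Finset α} (h : Collides S Nk B) (hB : B ⊆ Nuk) :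
    Collides S Nk Nuk :=
  ⟨h.1, h.2.trans (card_le_card (inter_subset_inter_left hB))⟩

/-- The event a pattern `(Nk, B)` asks for: when `#B < l` the pattern stands for `Nuk = B`,
when `#B = l` for every `Nuk ⊇ B`. -/
def Witnesses (l : ℕ) (S Nk B : Finset α) : Prop :=
  if #B < l then Selects S Nk B else Collides S Nk B

instance (l : ℕ) (S Nk B : Finset α) : Decidable (Witnesses l S Nk B) := by
  unfold Witnesses; infer_instance

theorem Witnesses.selects_or_collides {l : ℕ} {S Nk B Nuk : Finset α}
    (h : Witnesses l S Nk B) (hB : B ⊆ Nuk) (hBeq : #B < l → B = Nuk) :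
    Selects S Nk Nuk ∨ Collides S Nk Nuk := by
  unfold Witnesses at h
  split_ifs at h with hsmall
  · exact Or.inl (hBeq hsmall ▸ h)
  · exact Or.inr (h.mono_right hB)

theorem Selects.map {β : Type*} [DecidableEq β] (e : α ↪ β)
    {S Nk Nuk : Finset α} (h : Selects S Nk Nuk) :
    Selects (S.map e) (Nk.map e) (Nuk.map e) := by
  simpa only [Selects, ← map_inter, card_map, map_eq_empty] using h

theorem Collides.map {β : Type*} [DecidableEq β] (e : α ↪ β)
    {S Nk Nuk : Finset α} (h : Collides S Nk Nuk) :
    Collides (S.map e) (Nk.map e) (Nuk.map e) := by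
  simpa only [Collides, ← map_inter, card_map] using h

theorem inter_eq_singleton_of_disjoint_erase {S A : Finset α} {x : α} (hxA : x ∈ A)
    (hxS : x ∈ S) (hd : Disjoint (A.erase x) S) : S ∩ A = {x} :=
  eq_singleton_iff_unique_mem.2 ⟨mem_inter.2 ⟨hxS, hxA⟩, fun y hy => by
    by_contra hne
    exact disjoint_left.1 hd (mem_erase.2 ⟨hne, (mem_inter.1 hy).2⟩) (mem_inter.1 hy).1⟩

end Events

section RandomSet

variable {ι : Type*} [Fintype ι] {m : ℕ} [NeZero m]

def zeros (f : ι → Fin m) : Finset ι := {i | f i = 0}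

theorem mem_zeros {f : ι → Fin m} {i : ι} : i ∈ zeros f ↔ f i = 0 := by simp [zeros]

variable [DecidableEq ι]

theorem card_filter_subset_zeros_disjoint {Z W : Finset ι} (h : Disjoint Z W) :
    (#{f : ι → Fin m | Z ⊆ zeros f ∧ Disjoint W (zeros f)} : ℝ)
      = m ^ Fintype.card ι * ((1 / m) ^ #Z * (1 - 1 / m) ^ #W) := by
  let g : ι → Finset (Fin m) := fun i =>
    if i ∈ Z then {0} else if i ∈ W then {0}ᶜ else univ
  have hpi : ({f | Z ⊆ zeros f ∧ Disjoint W (zeros f)} : Finset (ι → Fin m))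
      = Fintype.piFinset g := by
    ext f
    simp only [mem_filter, mem_univ, true_and, Fintype.mem_piFinset, subset_iff,
      disjoint_left, mem_zeros, g]
    constructor
    · rintro ⟨hZ, hW⟩ i
      by_cases hiZ : i ∈ Z
      · simp [hiZ, hZ hiZ]
      · by_cases hiW : i ∈ W <;> simp [hiZ, hiW, hW]
    · intro hf
      refine ⟨fun i hi => by simpa [hi] using hf i, fun i hi => ?_⟩
      simpa [hi, disjoint_left.1 h.symm hi] using hf i
  have hm : (m : ℝ) ≠ 0 := Nat.cast_ne_zero.2 (NeZero.ne m)
  have hcard : ∀ i, (#(g i) : ℝ)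
      = m * ((if i ∈ Z then 1 / (m : ℝ) else 1) *
        (if i ∈ W then 1 - 1 / (m : ℝ) else 1)) := by
    intro i
    by_cases hiZ : i ∈ Z
    · simp [g, hiZ, disjoint_left.1 h hiZ, hm]
    · by_cases hiW : i ∈ W
      · simp [g, hiZ, hiW, card_compl, Nat.cast_sub NeZero.one_le]
        field_simp
      · simp [g, hiZ, hiW]
  rw [hpi, Fintype.card_piFinset, Nat.cast_prod, prod_congr rfl fun i _ => hcard i,
    prod_mul_distrib, prod_mul_distrib, prod_ite_mem, prod_ite_mem, univ_inter, univ_inter,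
    prod_const, prod_const, prod_const, card_univ]

theorem le_card_filter_selects {Nk Nuk : Finset ι} (hd : Disjoint Nk Nuk) (hne : Nuk.Nonempty) :
    m ^ Fintype.card ι * (1 / m * (1 - 1 / m) ^ (#Nk + #Nuk - 1))
      ≤ (#{f : ι → Fin m | Selects (zeros f) Nk Nuk} : ℝ) := by
  obtain ⟨x, hx⟩ := hne
  set E : Finset (ι → Fin m) := {f | {x} ⊆ zeros f ∧ Disjoint (Nk ∪ Nuk.erase x) (zeros f)}
  have hsub : E ⊆ ({f | Selects (zeros f) Nk Nuk} : Finset (ι → Fin m)) := by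
    intro f hf
    simp only [E, mem_filter, mem_univ, true_and, singleton_subset_iff,
      disjoint_union_left] at hf ⊢
    obtain ⟨hxf, hNk, hNuk⟩ := hf
    refine ⟨by rw [inter_eq_singleton_of_disjoint_erase hx hxf hNuk, card_singleton], ?_⟩
    exact disjoint_iff_inter_eq_empty.1 hNk.symm
  have hdx : Disjoint {x} (Nk ∪ Nuk.erase x) := by simp [disjoint_left.1 hd.symm hx]
  have hcard : #(Nk ∪ Nuk.erase x) = #Nk + #Nuk - 1 := by
    rw [card_union_of_disjoint (hd.mono_right (erase_subset _ _)), card_erase_of_mem hx]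
    have := card_pos.2 ⟨x, hx⟩
    omega
  have hE := card_filter_subset_zeros_disjoint (m := m) hdx
  rw [card_singleton, pow_one, hcard] at hE
  rw [← hE]
  exact_mod_cast card_le_card hsub

theorem le_card_filter_collides {Nk Nuk : Finset ι} (hd : Disjoint Nk Nuk) (hne : Nk.Nonempty) :
    m ^ Fintype.card ι * (1 / m * (1 - 1 / m) ^ (#Nk - 1) * (1 - (1 - 1 / m) ^ #Nuk))
      ≤ (#{f : ι → Fin m | Collides (zeros f) Nk Nuk} : ℝ) := by
  obtain ⟨x, hx⟩ := hne
  set E₁ : Finset (ι → Fin m) := {f | {x} ⊆ zeros f ∧ Disjoint (Nk.erase x) (zeros f)}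
  set E₂ : Finset (ι → Fin m) :=
    {f | {x} ⊆ zeros f ∧ Disjoint (Nk.erase x ∪ Nuk) (zeros f)}
  have hsub : E₁ \ E₂ ⊆ ({f | Collides (zeros f) Nk Nuk} : Finset (ι → Fin m)) := by
    intro f hf
    simp only [E₁, E₂, mem_sdiff, mem_filter, mem_univ, true_and, singleton_subset_iff,
      disjoint_union_left, not_and] at hf ⊢
    obtain ⟨⟨hxf, hNk⟩, hNuk⟩ := hf
    refine ⟨by rw [inter_eq_singleton_of_disjoint_erase hx hxf hNk, card_singleton], ?_⟩
    rw [Nat.one_le_iff_ne_zero, Ne, card_eq_zero, ← disjoint_iff_inter_eq_empty]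
    exact fun h => hNuk hxf hNk h.symm
  have hx₁ : Disjoint {x} (Nk.erase x) := by simp
  have hx₂ : Disjoint {x} (Nk.erase x ∪ Nuk) := by simp [disjoint_left.1 hd hx]
  have hcard : #(Nk.erase x ∪ Nuk) = #Nk - 1 + #Nuk := by
    rw [card_union_of_disjoint (hd.mono_left (erase_subset _ _)), card_erase_of_mem hx]
  have hE₁ := card_filter_subset_zeros_disjoint (m := m) hx₁
  have hE₂ := card_filter_subset_zeros_disjoint (m := m) hx₂
  rw [card_singleton, pow_one, card_erase_of_mem hx] at hE₁
  rw [card_singleton, pow_one, hcard, pow_add] at hE₂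
  have hsplit : (#E₁ : ℝ) ≤ #(E₁ \ E₂) + #E₂ := by
    exact_mod_cast card_le_card_sdiff_add_card
  have hcoll : (#(E₁ \ E₂) : ℝ) ≤ #{f : ι → Fin m | Collides (zeros f) Nk Nuk} := by
    exact_mod_cast card_le_card hsub
  rw [hE₁, hE₂] at hsplit
  linarith

end RandomSet

theorem one_half_le_one_sub_one_div_pow {m k : ℕ} (h : 2 * k ≤ m) :
    1 / 2 ≤ (1 - 1 / (m : ℝ)) ^ k := by
  rcases Nat.eq_zero_or_pos m with rfl | hm
  · norm_num [show k = 0 by omega]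
  have hmR : (1 : ℝ) ≤ m := by exact_mod_cast hm
  have hbern := one_add_mul_le_pow (a := -(1 / (m : ℝ)))
    (by linarith [div_le_one_of_le₀ hmR (by linarith : (0 : ℝ) ≤ m)]) k
  rw [← sub_eq_add_neg] at hbern
  have hkm : (2 * k : ℝ) ≤ m := by exact_mod_cast h
  have : k * (1 / (m : ℝ)) ≤ 1 / 2 := by
    rw [mul_one_div, div_le_iff₀ (by linarith)]
    linarith
  linarith

theorem one_sub_one_div_pow_le {l : ℕ} (hl : 0 < l) :
    (1 - 1 / (4 * l : ℝ)) ^ l ≤ 4 / 5 := by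
  have hlR : (1 : ℝ) ≤ l := by exact_mod_cast hl
  calc (1 - 1 / (4 * l : ℝ)) ^ l = (1 - (1 / 4) / l) ^ l := by rw [div_div]
    _ ≤ Real.exp (-(1 / 4)) := Real.one_sub_div_pow_le_exp_neg (by linarith)
    _ ≤ 4 / 5 := by
      rw [Real.exp_neg, inv_le_comm₀ (Real.exp_pos _) (by norm_num)]
      linarith [Real.add_one_le_exp (1 / 4 : ℝ)]

theorem le_card_filter_witnesses {ι : Type*} [Fintype ι] [DecidableEq ι] {l : ℕ} [NeZero l]
    {Nk B : Finset ι} (hd : Disjoint Nk B) (hB : B.Nonempty) (hNk : #Nk ≤ l) (hBl : #B ≤ l)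
    (hbig : #B = l → Nk.Nonempty) :
    1 / (40 * l) * Fintype.card (ι → Fin (4 * l))
      ≤ (#{f : ι → Fin (4 * l) | Witnesses l (zeros f) Nk B} : ℝ) := by
  have hl : 0 < l := Nat.pos_of_neZero l
  have hm : ((4 * l : ℕ) : ℝ) = 4 * l := by push_cast; ring
  have hx : (0 : ℝ) < 1 / (4 * l) := by positivity
  have hδ : 1 / (40 * l : ℝ) = 1 / (4 * l) / 10 := by field_simp; norm_num
  rw [Fintype.card_fun, Fintype.card_fin, Nat.cast_pow, mul_comm, hδ]
  rcases lt_or_ge #B l with hsmall | hlarge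
  · simp only [Witnesses, if_pos hsmall]
    refine le_trans ?_ (le_card_filter_selects hd hB)
    have hq := one_half_le_one_sub_one_div_pow (m := 4 * l) (k := #Nk + #B - 1) (by omega)
    rw [hm] at hq ⊢
    gcongr
    calc 1 / (4 * l) / 10 ≤ 1 / (4 * l : ℝ) * (1 / 2) := by linarith
      _ ≤ _ := by gcongr
  · have hBeq : #B = l := by omega
    simp only [Witnesses, if_neg hlarge.not_gt]
    refine le_trans ?_ (le_card_filter_collides hd (hbig hBeq))
    have hq := one_half_le_one_sub_one_div_pow (m := 4 * l) (k := #Nk - 1) (by omega)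
    rw [hm] at hq ⊢
    rw [hBeq]
    gcongr
    calc 1 / (4 * l) / 10 = 1 / (4 * l : ℝ) * (1 / 2) * (1 - 4 / 5) := by ring
      _ ≤ _ := by gcongr; exact one_sub_one_div_pow_le hl

section Patterns

variable {α : Type*} [Fintype α] [DecidableEq α]

theorem card_filter_card_le_le (l : ℕ) :
    #{s : Finset α | #s ≤ l} ≤ (Fintype.card α + 1) ^ l := by
  induction l with
  | zero => simp [card_le_one]
  | succ l ih =>
    let extend : Option α × Finset α → Finset α := fun p => p.1.elim p.2 (insert · p.2)
    have hcover : ({s | #s ≤ l + 1} : Finset (Finset α)) ⊆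
        (univ ×ˢ ({s | #s ≤ l} : Finset (Finset α))).image extend := by
      intro s hs
      rw [mem_filter] at hs
      obtain rfl | ⟨x, hx⟩ := s.eq_empty_or_nonempty
      · exact mem_image.2 ⟨(none, ∅), by simp, rfl⟩
      · refine mem_image.2 ⟨(some x, s.erase x), ?_, insert_erase hx⟩
        simp only [mem_product, mem_univ, mem_filter, true_and, card_erase_of_mem hx]
        omega
    calc #{s : Finset α | #s ≤ l + 1}
        ≤ #((univ : Finset (Option α)) ×ˢ ({s | #s ≤ l} : Finset (Finset α))) :=
          (card_le_card hcover).trans card_image_le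
      _ ≤ (Fintype.card α + 1) * (Fintype.card α + 1) ^ l := by
        rw [card_product, card_univ, Fintype.card_option]
        exact Nat.mul_le_mul_left _ ih
      _ = (Fintype.card α + 1) ^ (l + 1) := (pow_succ' _ _).symm

def patterns (l : ℕ) : Finset (Finset α × Finset α) :=
  ((({s | #s ≤ l} : Finset (Finset α))) ×ˢ ({s | #s ≤ l} : Finset (Finset α))).filter
    fun p => Disjoint p.1 p.2 ∧ p.2.Nonempty ∧ (#p.2 = l → p.1.Nonempty)

theorem mem_patterns {l : ℕ} {Nk B : Finset α} :
    (Nk, B) ∈ patterns l ↔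
      (#Nk ≤ l ∧ #B ≤ l) ∧ Disjoint Nk B ∧ B.Nonempty ∧ (#B = l → Nk.Nonempty) := by
  simp [patterns]

theorem card_patterns_le (l : ℕ) : #(patterns (α := α) l) ≤ (Fintype.card α + 1) ^ (2 * l) :=
  calc #(patterns (α := α) l)
      ≤ #({s | #s ≤ l} : Finset (Finset α)) * #({s | #s ≤ l} : Finset (Finset α)) :=
        (card_filter_le _ _).trans (card_product _ _).le
    _ ≤ (Fintype.card α + 1) ^ l * (Fintype.card α + 1) ^ l :=
        Nat.mul_le_mul (card_filter_card_le_le l) (card_filter_card_le_le l)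
    _ = (Fintype.card α + 1) ^ (2 * l) := by rw [← pow_add, two_mul]

theorem exists_mem_patterns {l : ℕ} {Nk Nuk : Finset α} (hd : Disjoint Nk Nuk) (hNk : #Nk < l)
    (hne : Nuk.Nonempty) (hbig : l ≤ #Nuk → Nk.Nonempty) :
    ∃ B ⊆ Nuk, (Nk, B) ∈ patterns l ∧ (#B < l → B = Nuk) := by
  rcases lt_or_ge #Nuk l with hsmall | hlarge
  · exact ⟨Nuk, subset_rfl, mem_patterns.2 ⟨⟨hNk.le, hsmall.le⟩, hd, hne,
      fun h => absurd h hsmall.ne⟩, fun _ => rfl⟩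
  · obtain ⟨B, hBsub, hBcard⟩ := exists_subset_card_eq hlarge
    refine ⟨B, hBsub, mem_patterns.2 ⟨⟨hNk.le, hBcard.le⟩, hd.mono_right hBsub, ?_,
      fun _ => hbig hlarge⟩, fun h => absurd hBcard h.ne⟩
    exact card_pos.1 (by omega)

end Patterns

theorem exists_forall_exists_mem_of_card_lt_exp {τ ι : Type*} [Fintype τ] [Nonempty τ]
    (P : Finset ι) (G : ι → Finset τ) {δ : ℝ} {t : ℕ} (hδ : δ ≤ 1)
    (hG : ∀ p ∈ P, δ * Fintype.card τ ≤ #(G p)) (hP : #P < Real.exp (δ * t)) :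
    ∃ x : Fin t → τ, ∀ p ∈ P, ∃ i, x i ∈ G p := by
  classical
  by_contra! hbad
  have hcover : (univ : Finset (Fin t → τ)) ⊆
      P.biUnion fun p => Fintype.piFinset fun _ => (G p)ᶜ := by
    intro x _
    obtain ⟨p, hp, hx⟩ := hbad x
    exact mem_biUnion.2 ⟨p, hp, Fintype.mem_piFinset.2 fun i => mem_compl.2 (hx i)⟩
  have hcompl : ∀ p ∈ P, (#(G p)ᶜ : ℝ) ≤ (1 - δ) * Fintype.card τ := by
    intro p hp
    rw [card_compl, Nat.cast_sub (card_le_univ _)]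
    linarith [hG p hp]
  have hmiss : #P * (1 - δ) ^ t < 1 := calc
    #P * (1 - δ) ^ t ≤ #P * Real.exp (-(δ * t)) := by
      gcongr
      rw [← neg_mul, mul_comm, Real.exp_nat_mul]
      exact pow_le_pow_left₀ (by linarith) (Real.one_sub_le_exp_neg δ) t
    _ < Real.exp (δ * t) * Real.exp (-(δ * t)) := by gcongr
    _ = 1 := by rw [← Real.exp_add, add_neg_cancel, Real.exp_zero]
  have hτ : (0 : ℝ) < (Fintype.card τ : ℝ) ^ t := by positivity
  have hcount : (Fintype.card τ : ℝ) ^ t < 1 * (Fintype.card τ : ℝ) ^ t := calc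
    (Fintype.card τ : ℝ) ^ t
      = #(univ : Finset (Fin t → τ)) := by simp
    _ ≤ #(P.biUnion fun p => Fintype.piFinset fun _ => (G p)ᶜ) := by
      exact_mod_cast card_le_card hcover
    _ ≤ ∑ p ∈ P, (#(G p)ᶜ : ℝ) ^ t := by exact_mod_cast card_biUnion_le.trans (by simp)
    _ ≤ ∑ p ∈ P, ((1 - δ) * Fintype.card τ) ^ t :=
        sum_le_sum fun p hp => pow_le_pow_left₀ (Nat.cast_nonneg _) (hcompl p hp) t
    _ = #P * (1 - δ) ^ t * (Fintype.card τ : ℝ) ^ t := by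
      rw [sum_const, nsmul_eq_mul, mul_pow, mul_assoc]
    _ < 1 * (Fintype.card τ : ℝ) ^ t := mul_lt_mul_of_pos_right hmiss hτ
  linarith

theorem exists_selects_or_collides {α : Type*} [Fintype α] [DecidableEq α] {l t : ℕ}
    (hl : 0 < l) (ht : ((Fintype.card α : ℝ) + 1) ^ (2 * l) < Real.exp (t / (40 * l))) :
    ∃ F : Finset (Finset α), #F ≤ t ∧
      ∀ Nk Nuk : Finset α, Disjoint Nk Nuk → #Nk < l → Nuk.Nonempty →
        (l ≤ #Nuk → Nk.Nonempty) → ∃ S ∈ F, Selects S Nk Nuk ∨ Collides S Nk Nuk := by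
  have : NeZero l := ⟨hl.ne'⟩
  let G : Finset α × Finset α → Finset (α → Fin (4 * l)) := fun p =>
    {f | Witnesses l (zeros f) p.1 p.2}
  have hG : ∀ p ∈ patterns l,
      1 / (40 * l) * Fintype.card (α → Fin (4 * l)) ≤ (#(G p) : ℝ) := by
    rintro ⟨Nk, B⟩ hp
    obtain ⟨⟨hNk, hB⟩, hd, hne, hbig⟩ := mem_patterns.1 hp
    exact le_card_filter_witnesses hd hne hNk hB hbig
  have hP : (#(patterns (α := α) l) : ℝ) < Real.exp (1 / (40 * l) * t) := calc
    _ ≤ ((Fintype.card α : ℝ) + 1) ^ (2 * l) := by exact_mod_cast card_patterns_le l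
    _ < _ := by rwa [one_div_mul_eq_div]
  obtain ⟨g, hg⟩ := exists_forall_exists_mem_of_card_lt_exp (patterns l) G
    (by rw [div_le_one (by positivity)]; norm_cast; omega) hG hP
  refine ⟨univ.image fun i => zeros (g i), card_image_le.trans (by simp), ?_⟩
  intro Nk Nuk hd hNk hne hbig
  obtain ⟨B, hBsub, hp, hBeq⟩ := exists_mem_patterns hd hNk hne hbig
  obtain ⟨i, hi⟩ := hg _ hp
  exact ⟨zeros (g i), mem_image_of_mem _ (mem_univ i),
    (mem_filter.1 hi).2.selects_or_collides hBsub hBeq⟩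

noncomputable def familySize (c l : ℕ) : ℕ := ⌊80 * (c + 1) * l ^ 2 * Real.log l⌋₊ + 1

theorem familySize_le {c l : ℕ} (hl : 3 ≤ l) :
    (familySize c l : ℝ) ≤ (80 * (c + 1) + 1) * l ^ 2 * Real.log l := by
  have hlR : (3 : ℝ) ≤ l := by exact_mod_cast hl
  have hlog : 1 ≤ Real.log l := by
    rw [Real.le_log_iff_exp_le (by linarith)]
    linarith [Real.exp_one_lt_d9]
  have hone : (1 : ℝ) ≤ l ^ 2 * Real.log l := by nlinarith
  have hfloor := Nat.floor_le (a := 80 * (c + 1) * (l : ℝ) ^ 2 * Real.log l) (by positivity)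
  simp only [familySize, Nat.cast_add, Nat.cast_one]
  linarith

theorem pow_lt_exp_familySize {c l : ℕ} (hl : 2 ≤ l) :
    ((l : ℝ) ^ c + 1) ^ (2 * l) < Real.exp (familySize c l / (40 * l)) := by
  have hlR : (2 : ℝ) ≤ l := by exact_mod_cast hl
  have hsucc : (l : ℝ) ^ c + 1 ≤ (l : ℝ) ^ (c + 1) := by
    have := one_le_pow₀ (n := c) (by linarith : (1 : ℝ) ≤ l)
    rw [pow_succ]; nlinarith
  have hfloor := Nat.lt_floor_add_one (80 * (c + 1) * (l : ℝ) ^ 2 * Real.log l)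
  have hlog : 0 < Real.log l := Real.log_pos (by linarith)
  calc ((l : ℝ) ^ c + 1) ^ (2 * l) ≤ ((l : ℝ) ^ (c + 1)) ^ (2 * l) := by gcongr
    _ = Real.exp (((c + 1) * (2 * l) : ℕ) * Real.log l) := by
      rw [Real.exp_nat_mul, Real.exp_log (by linarith), ← pow_mul]
    _ < Real.exp (familySize c l / (40 * l)) := by
      rw [Real.exp_lt_exp, lt_div_iff₀ (by positivity), familySize]
      push_cast at hfloor ⊢
      nlinarith

end SelectingColliding

open SelectingColliding

theorem selecting_colliding_family_exists_general (c : ℕ) :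
    ∃ D : ℝ, 0 < D ∧
      ∀ l : ℕ, 3 < l →
        ∃ F : Finset (Finset ℕ),
          (∀ S ∈ F, S ⊆ Finset.Icc 1 (l ^ c)) ∧
          (F.card : ℝ) ≤ D * (l : ℝ) ^ 2 * Real.log (l : ℝ) ∧
          (∀ Nk Nuk : Finset ℕ,
            Nk ⊆ Finset.Icc 1 (l ^ c) → Nuk ⊆ Finset.Icc 1 (l ^ c) →
            Disjoint Nk Nuk → Nk.card < l → Nuk.Nonempty →
            (l ≤ Nuk.card → Nk.Nonempty) →
            ∃ S ∈ F,
              ((S ∩ Nuk).card = 1 ∧ S ∩ Nk = ∅) ∨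
              ((S ∩ Nk).card = 1 ∧ 1 ≤ (S ∩ Nuk).card)) := by
  refine ⟨80 * (c + 1) + 1, by positivity, fun l hl => ?_⟩
  set U := Finset.Icc 1 (l ^ c)
  let e : U ↪ ℕ := Function.Embedding.subtype _
  have hU : (univ : Finset U).map e = U := by rw [univ_eq_attach, attach_map_val]
  have hcardU : (Fintype.card U : ℝ) = (l : ℝ) ^ c := by simp [U]
  obtain ⟨F, hFt, hF⟩ := exists_selects_or_collides (α := U) (l := l) (t := familySize c l)
    (by omega) (by rw [hcardU]; exact pow_lt_exp_familySize (by omega))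
  refine ⟨F.image (·.map e), ?_, ?_, ?_⟩
  · simp only [mem_image, forall_exists_index, and_imp, forall_apply_eq_imp_iff₂]
    exact fun S _ => (map_subset_map.2 (subset_univ S)).trans hU.subset
  · calc (#(F.image (·.map e)) : ℝ) ≤ familySize c l := by
          exact_mod_cast card_image_le.trans hFt
      _ ≤ _ := familySize_le hl.le
  · intro Nk Nuk hNk hNuk hd hNkl hne hbig
    rw [← hU, subset_map_iff] at hNk hNuk
    obtain ⟨Nk, -, rfl⟩ := hNk
    obtain ⟨Nuk, -, rfl⟩ := hNuk
    simp only [disjoint_map, card_map, map_nonempty] at hd hNkl hne hbig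
    obtain ⟨S, hS, h⟩ := hF Nk Nuk hd hNkl hne hbig
    exact ⟨S.map e, mem_image_of_mem _ hS, h.imp (Selects.map e) (Collides.map e)⟩

/-- Existence of Selecting-Colliding families: for a fixed integer `c ≥ 2` there is a
constant `D > 0` such that for every integer `l > 3` there is a family `F` of subsets of
`{1,…,l^c}` with `|F| ≤ D·l²·log l` such that for all disjoint `N_k, N_uk ⊆ {1,…,l^c}`
with `|N_k| < l`, `N_uk` nonempty, and `N_k` nonempty whenever `|N_uk| ≥ l`, some
`S ∈ F` satisfies Condition A (`|S ∩ N_uk| = 1` and `S ∩ N_k = ∅`) or Condition B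
(`|S ∩ N_k| = 1` and `|S ∩ N_uk| ≥ 1`). -/
theorem selecting_colliding_family_exists (c : ℕ) (hc : 2 ≤ c) :
    ∃ D : ℝ, 0 < D ∧
      ∀ l : ℕ, 3 < l →
        ∃ F : Finset (Finset ℕ),
          (∀ S ∈ F, S ⊆ Finset.Icc 1 (l ^ c)) ∧
          (F.card : ℝ) ≤ D * (l : ℝ) ^ 2 * Real.log (l : ℝ) ∧
          (∀ Nk Nuk : Finset ℕ,
            Nk ⊆ Finset.Icc 1 (l ^ c) → Nuk ⊆ Finset.Icc 1 (l ^ c) →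
            Disjoint Nk Nuk → Nk.card < l → Nuk.Nonempty →
            (l ≤ Nuk.card → Nk.Nonempty) →
            ∃ S ∈ F,
              ((S ∩ Nuk).card = 1 ∧ S ∩ Nk = ∅) ∨
              ((S ∩ Nk).card = 1 ∧ 1 ≤ (S ∩ Nuk).card)) :=
  selecting_colliding_family_exists_general c
end

section
/- Core probabilistic-method step at a fixed dyadic scale: fix an integer c ≥ 2. There exists a constant d > 0 (depending only on c) such that for all integers l > 3 and m with 1 ≤ m ≤ l, there exists a family F of subsets of {1,…,l^c} with |F| ≤ d · l · m · Real.log l such that for all disjoint subsets N_k, N_uk of {1,…,l^c} with ⌈m/2⌉ ≤ |N_k| ≤ m and |N_uk| ≥ l, there exists S ∈ F with |S ∩ N_k| = 1 and |S ∩ N_uk| ≥ 1. -/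
/-!
Colour the ground set `U` uniformly at random with `m` colours and let `S` be colour class `0`.
For a fixed `x₀ ∈ A`, the event "`x₀ ∈ S`, `S` misses the rest of `A`, and `S` meets `B`" has
probability `(1/m) (1 - 1/m)^(|A|-1) (1 - (1 - 1/m)^|B|) ≥ 1/(6m)` when `|A| ≤ m ≤ |B|`.
Shrinking `B` to exactly `m` elements leaves at most `(|U| + 1)^(2m)` pairs `(A, B)`, so
`t > 6m · 2m log(|U| + 1)` independent colourings succeed for all pairs simultaneously with
positive probability (union bound). For `|U| = l^c` this gives `t = O(c m² log l) = O(c l m log l)`.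
-/

open Finset

lemma succ_pow_le_three_mul_pow {n j : ℕ} (hj : j ≤ n) : (n + 1) ^ j ≤ 3 * n ^ j := by
  rcases Nat.eq_zero_or_pos n with rfl | hn
  · simp_all
  have hbound : (1 + (n : ℝ)⁻¹) ^ j ≤ 3 := calc
    (1 + (n : ℝ)⁻¹) ^ j ≤ (1 + (n : ℝ)⁻¹) ^ n :=
      pow_le_pow_right₀ (le_add_of_nonneg_right (by positivity)) hj
    _ ≤ Real.exp 1 := Real.one_add_inv_pow_le_exp
    _ ≤ 3 := by linarith [Real.exp_one_lt_d9]
  have hsplit : ((n : ℝ) + 1) ^ j = (n : ℝ) ^ j * (1 + (n : ℝ)⁻¹) ^ j := by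
    rw [← mul_pow]; field_simp
  have : ((n : ℝ) + 1) ^ j ≤ 3 * (n : ℝ) ^ j := by
    rw [hsplit, mul_comm 3]; gcongr
  exact_mod_cast this

lemma two_mul_pow_le_succ_pow {n v : ℕ} (hv : n + 1 ≤ v) : 2 * n ^ v ≤ (n + 1) ^ v := by
  set a : ℝ := 1 - 1 / ((n + 1 : ℕ) : ℝ)
  have ha : a = n / (n + 1) := by simp only [a]; push_cast; field_simp; ring
  have ha₀ : 0 ≤ a := by rw [ha]; positivity
  have hbound : a ^ v ≤ 1 / 2 := calc
    a ^ v ≤ a ^ (n + 1) := pow_le_pow_of_le_one ha₀ (by simp [a]; positivity) hv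
    _ ≤ Real.exp (-1) := Real.one_sub_div_pow_le_exp_neg (by simp)
    _ ≤ 1 / 2 := Real.exp_neg_one_lt_half.le
  have hsplit : (n : ℝ) ^ v = ((n : ℝ) + 1) ^ v * a ^ v := by
    rw [← mul_pow, ha]; field_simp
  have : 2 * (n : ℝ) ^ v ≤ ((n : ℝ) + 1) ^ v := by
    rw [hsplit]; nlinarith [pow_pos (show (0:ℝ) < n + 1 by positivity) v]
  exact_mod_cast this

-- With `m = n + 1`, `|A| = j + 1`, `|B| = v` and `|α| = j + v + w + 1`, the difference on the
-- right is `#(isolating x₀ A) - #(isolating x₀ (A ∪ B))`.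
lemma succ_pow_le_six_mul_sub {n j v w : ℕ} (hj : j ≤ n) (hv : n + 1 ≤ v) :
    (n + 1) ^ (j + v + w + 1) ≤
      6 * (n + 1) * (n ^ j * (n + 1) ^ (v + w) - n ^ (j + v) * (n + 1) ^ w) := by
  have h3 := succ_pow_le_three_mul_pow hj
  have h2 := two_mul_pow_le_succ_pow hv
  have hfactor : n ^ j * (n + 1) ^ (v + w) - n ^ (j + v) * (n + 1) ^ w =
      n ^ j * (n + 1) ^ w * ((n + 1) ^ v - n ^ v) := by
    rw [Nat.mul_sub, pow_add, pow_add]; ring_nf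
  calc (n + 1) ^ (j + v + w + 1) = (n + 1) ^ j * (n + 1) ^ v * (n + 1) ^ w * (n + 1) := by ring
    _ ≤ (3 * n ^ j) * (2 * ((n + 1) ^ v - n ^ v)) * (n + 1) ^ w * (n + 1) := by
      gcongr; omega
    _ = _ := by rw [hfactor]; ring

lemma card_powerset_filter_card_le {α : Type*} (s : Finset α) (m : ℕ) :
    #{t ∈ s.powerset | #t ≤ m} ≤ (#s + 1) ^ m := by
  classical
  calc #{t ∈ s.powerset | #t ≤ m}
      ≤ #((range (m + 1)).biUnion fun j => s.powersetCard j) := by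
        refine card_le_card fun t ht => ?_
        simp only [mem_filter, mem_powerset] at ht
        exact mem_biUnion.2
          ⟨#t, mem_range.2 (Nat.lt_succ_of_le ht.2), mem_powersetCard.2 ⟨ht.1, rfl⟩⟩
    _ ≤ ∑ j ∈ range (m + 1), (#s).choose j :=
        card_biUnion_le.trans_eq (by simp only [card_powersetCard])
    _ ≤ ∑ j ∈ range (m + 1), #s ^ j * 1 ^ (m - j) * m.choose j := by
        refine sum_le_sum fun j hj => ?_
        rw [one_pow, mul_one]
        exact (Nat.choose_le_pow _ _).trans
          (Nat.le_mul_of_pos_right _ (Nat.choose_pos (Nat.lt_succ_iff.1 (mem_range.1 hj))))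
    _ = (#s + 1) ^ m := (add_pow _ _ _).symm

theorem exists_tuple_forall_exists_mem {Ω ι : Type*} [Fintype Ω] [Nonempty Ω] [DecidableEq Ω]
    (s : Finset ι) (G : ι → Finset Ω) {q : ℝ} (hG : ∀ i ∈ s, q * Fintype.card Ω ≤ #(G i))
    {t : ℕ} (hs : #s * (1 - q) ^ t < 1) : ∃ w : Fin t → Ω, ∀ i ∈ s, ∃ j, w j ∈ G i := by
  by_contra! hbad
  have hcover :
      (univ : Finset (Fin t → Ω)) ⊆ s.biUnion fun i => Fintype.piFinset fun _ => (G i)ᶜ :=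
    fun w _ => by
      obtain ⟨i, hi, hw⟩ := hbad w
      exact mem_biUnion.2 ⟨i, hi, Fintype.mem_piFinset.2 fun j => mem_compl.2 (hw j)⟩
  set M : ℝ := (Fintype.card Ω : ℝ)
  have hbad_le : M ^ t ≤ #s * ((1 - q) * M) ^ t := calc
    M ^ t = #(univ : Finset (Fin t → Ω)) := by simp [M]
    _ ≤ ∑ i ∈ s, (#(G i)ᶜ : ℝ) ^ t := by
      exact_mod_cast (card_le_card hcover).trans (card_biUnion_le.trans_eq (by simp))
    _ ≤ ∑ i ∈ s, ((1 - q) * M) ^ t := sum_le_sum fun i hi => by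
      gcongr
      rw [card_compl, Nat.cast_sub (card_le_univ _)]
      linarith [hG i hi]
    _ = #s * ((1 - q) * M) ^ t := by rw [sum_const, nsmul_eq_mul]
  have hM : 0 < M ^ t := by positivity
  rw [mul_pow, ← mul_assoc] at hbad_le
  nlinarith

section Colorings

variable {α : Type*} [DecidableEq α]

def SelectsOneAndHits (S A B : Finset α) : Prop := #(S ∩ A) = 1 ∧ (S ∩ B).Nonempty

instance (S A B : Finset α) : Decidable (SelectsOneAndHits S A B) :=
  inferInstanceAs (Decidable (_ ∧ _))

lemma SelectsOneAndHits.mono_right {S A B B' : Finset α} (h : SelectsOneAndHits S A B)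
    (hB : B ⊆ B') : SelectsOneAndHits S A B' :=
  ⟨h.1, h.2.mono (inter_subset_inter_left hB)⟩

lemma selectsOneAndHits_map {β : Type*} [DecidableEq β] (e : α ↪ β) {S A B : Finset α} :
    SelectsOneAndHits (S.map e) (A.map e) (B.map e) ↔ SelectsOneAndHits S A B := by
  simp only [SelectsOneAndHits, ← map_inter, card_map, map_nonempty]

variable [Fintype α] {m : ℕ} [NeZero m]

def zeroFiber (f : α → Fin m) : Finset α := {x | f x = 0}

def isolating (x₀ : α) (T : Finset α) : Finset (α → Fin m) :=
  {f | ∀ x ∈ T, f x = 0 ↔ x = x₀}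

lemma isolating_eq_piFinset (x₀ : α) (T : Finset α) :
    isolating (m := m) x₀ T =
      Fintype.piFinset fun x => if x ∈ T then (if x = x₀ then {0} else {0}ᶜ) else univ := by
  ext f
  simp only [isolating, mem_filter, mem_univ, true_and, Fintype.mem_piFinset]
  refine forall_congr' fun x => ?_
  rcases eq_or_ne x x₀ with rfl | hx₀ <;> by_cases hx : x ∈ T <;> simp [*]

lemma card_isolating {x₀ : α} {T : Finset α} (hx₀ : x₀ ∈ T) :
    #(isolating (m := m) x₀ T) = (m - 1) ^ (#T - 1) * m ^ (Fintype.card α - #T) := by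
  simp only [isolating_eq_piFinset, Fintype.card_piFinset, apply_ite card, card_singleton,
    card_compl, card_univ, Fintype.card_fin]
  rw [prod_ite, filter_mem_eq_inter, univ_inter, ← mul_prod_erase T _ hx₀, if_pos rfl, one_mul,
    prod_congr rfl fun x hx => if_neg (ne_of_mem_erase hx), prod_const, prod_const,
    card_erase_of_mem hx₀, filter_notMem_eq_sdiff, ← compl_eq_univ_sdiff, card_compl]

lemma selectsOneAndHits_of_mem_isolating_sdiff {x₀ : α} {A B : Finset α} (hx₀ : x₀ ∈ A)
    {f : α → Fin m} (hf : f ∈ isolating x₀ A \ isolating x₀ (A ∪ B)) :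
    SelectsOneAndHits (zeroFiber f) A B := by
  simp only [isolating, mem_sdiff, mem_filter, mem_univ, true_and, not_forall] at hf
  obtain ⟨hA, x, hxAB, hx⟩ := hf
  have hxA : x ∉ A := fun hxA => hx (hA x hxA)
  refine ⟨card_eq_one.2 ⟨x₀, ?_⟩, ⟨x, ?_⟩⟩
  · ext y
    simp only [zeroFiber, mem_inter, mem_filter, mem_univ, true_and, mem_singleton]
    exact ⟨fun hy => (hA y hy.2).1 hy.1, fun hy => hy ▸ ⟨(hA x₀ hx₀).2 rfl, hx₀⟩⟩
  · have hxx₀ : x ≠ x₀ := fun h => hxA (h ▸ hx₀)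
    simp only [zeroFiber, mem_inter, mem_filter, mem_univ, true_and]
    exact ⟨by tauto, (mem_union.1 hxAB).resolve_left hxA⟩

theorem card_univ_le_six_mul_card_selectsOneAndHits {A B : Finset α} (hAB : Disjoint A B)
    (hA : A.Nonempty) (hAm : #A ≤ m) (hBm : m ≤ #B) :
    m ^ Fintype.card α ≤ 6 * m * #{f : α → Fin m | SelectsOneAndHits (zeroFiber f) A B} := by
  obtain ⟨x₀, hx₀⟩ := hA
  obtain ⟨n, rfl⟩ : ∃ n, m = n + 1 := Nat.exists_eq_add_one.2 (Nat.pos_of_neZero m)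
  obtain ⟨j, hj⟩ : ∃ j, #A = j + 1 := Nat.exists_eq_add_one.2 (card_pos.2 ⟨x₀, hx₀⟩)
  obtain ⟨w, hw⟩ : ∃ w, Fintype.card α = #A + #B + w :=
    Nat.exists_eq_add_of_le ((card_union_of_disjoint hAB).symm.trans_le (card_le_univ _))
  have hsub : isolating (m := n + 1) x₀ (A ∪ B) ⊆ isolating x₀ A := fun f hf => by
    simp only [isolating, mem_filter, mem_univ, true_and] at hf ⊢
    exact fun x hx => hf x (mem_union_left B hx)
  have hsdiff : isolating x₀ A \ isolating x₀ (A ∪ B) ⊆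
      ({f | SelectsOneAndHits (zeroFiber f) A B} : Finset (α → Fin (n + 1))) := fun f hf =>
    mem_filter.2 ⟨mem_univ f, selectsOneAndHits_of_mem_isolating_sdiff hx₀ hf⟩
  have hcount := card_le_card hsdiff
  rw [card_sdiff_of_subset hsub, card_isolating hx₀, card_isolating (mem_union_left B hx₀),
    card_union_of_disjoint hAB, hj, hw, Nat.add_sub_cancel] at hcount
  calc (n + 1) ^ Fintype.card α = (n + 1) ^ (j + #B + w + 1) := by rw [hw, hj]; ring_nf
    _ ≤ _ := succ_pow_le_six_mul_sub (by omega) (by omega)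
    _ ≤ _ := by
      gcongr
      convert hcount using 3 <;> congr 1 <;> omega

theorem exists_colorings_selectsOneAndHits {t : ℕ}
    (ht : ((Fintype.card α + 1 : ℕ) : ℝ) ^ (2 * m) < Real.exp (t / (6 * m))) :
    ∃ w : Fin t → α → Fin m, ∀ A B : Finset α, Disjoint A B → A.Nonempty → #A ≤ m → m ≤ #B →
      ∃ j, SelectsOneAndHits (zeroFiber (w j)) A B := by
  set T := (univ : Finset α).powerset.filter (#· ≤ m)
  set s := (T ×ˢ T).filter fun P => Disjoint P.1 P.2 ∧ P.1.Nonempty ∧ #P.2 = m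
  have hs : #s ≤ (Fintype.card α + 1) ^ (2 * m) := calc
    #s ≤ #T * #T := (card_filter_le _ _).trans_eq (card_product _ _)
    _ ≤ (Fintype.card α + 1) ^ m * (Fintype.card α + 1) ^ m := by
      gcongr <;> exact card_univ (α := α) ▸ card_powerset_filter_card_le _ _
    _ = _ := by ring
  have hm : (0 : ℝ) < m := Nat.cast_pos.2 (Nat.pos_of_neZero m)
  set q : ℝ := 1 / (6 * m)
  have hst : #s * (1 - q) ^ t < 1 := calc
    #s * (1 - q) ^ t ≤ #s * Real.exp (-q) ^ t := by
      gcongr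
      · rw [sub_nonneg, div_le_one (by positivity)]
        linarith [(Nat.one_le_cast (α := ℝ)).2 (Nat.pos_of_neZero m)]
      · exact Real.one_sub_le_exp_neg q
    _ < Real.exp (t / (6 * m)) * Real.exp (-(t / (6 * m))) := by
      rw [← Real.exp_nat_mul, show (t : ℝ) * -q = -(t / (6 * m)) by simp only [q]; ring]
      gcongr
      exact lt_of_le_of_lt (by exact_mod_cast hs) ht
    _ = 1 := by rw [← Real.exp_add, add_neg_cancel, Real.exp_zero]
  obtain ⟨w, hw⟩ := exists_tuple_forall_exists_mem s
    (fun P => {f : α → Fin m | SelectsOneAndHits (zeroFiber f) P.1 P.2}) (q := q)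
    (fun P hP => by
      simp only [s, T, mem_filter, mem_product] at hP
      obtain ⟨⟨⟨-, hAm⟩, -⟩, hAB, hA, hB⟩ := hP
      have hcount := card_univ_le_six_mul_card_selectsOneAndHits hAB hA hAm hB.ge
      rw [Fintype.card_fun, Fintype.card_fin, div_mul_eq_mul_div, one_mul,
        div_le_iff₀ (by positivity)]
      exact_mod_cast hcount.trans_eq (mul_comm _ _)) hst
  refine ⟨w, fun A B hAB hA hAm hBm => ?_⟩
  obtain ⟨B', hB'B, hB'⟩ := exists_subset_card_eq hBm
  obtain ⟨j, hj⟩ := hw (A, B') (by simp [s, T, hAm, hB', hA, hAB.mono_right hB'B])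
  exact ⟨j, (mem_filter.1 hj).2.mono_right hB'B⟩

end Colorings

theorem exists_finset_selectsOneAndHits {β : Type*} [DecidableEq β] (U : Finset β) {m t : ℕ}
    (hm : 0 < m) (ht : ((#U + 1 : ℕ) : ℝ) ^ (2 * m) < Real.exp (t / (6 * m))) :
    ∃ F : Finset (Finset β), (∀ S ∈ F, S ⊆ U) ∧ #F ≤ t ∧
      ∀ A B, A ⊆ U → B ⊆ U → Disjoint A B → A.Nonempty → #A ≤ m → m ≤ #B →
        ∃ S ∈ F, SelectsOneAndHits S A B := by
  have : NeZero m := ⟨hm.ne'⟩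
  obtain ⟨w, hw⟩ := exists_colorings_selectsOneAndHits (α := U) (m := m) (t := t)
    (by rwa [Fintype.card_coe])
  refine ⟨univ.image fun j => (zeroFiber (w j)).map (Function.Embedding.subtype _), ?_, ?_, ?_⟩
  · simp only [mem_image, mem_univ, true_and, forall_exists_index, forall_apply_eq_imp_iff]
    intro j x hx
    obtain ⟨y, -, rfl⟩ := mem_map.1 hx
    exact y.2
  · exact card_image_le.trans_eq (by simp)
  · intro A B hAU hBU hAB hA hAm hBm
    obtain ⟨A, rfl⟩ : ∃ A' : Finset U, A'.map (Function.Embedding.subtype (· ∈ U)) = A :=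
      ⟨_, subtype_map_of_mem hAU⟩
    obtain ⟨B, rfl⟩ : ∃ B' : Finset U, B'.map (Function.Embedding.subtype (· ∈ U)) = B :=
      ⟨_, subtype_map_of_mem hBU⟩
    rw [disjoint_map] at hAB
    rw [map_nonempty] at hA
    rw [card_map] at hAm hBm
    obtain ⟨j, hj⟩ := hw A B hAB hA hAm hBm
    exact ⟨_, mem_image_of_mem _ (mem_univ j), (selectsOneAndHits_map _).2 hj⟩

lemma cast_pow_succ_pow_lt_exp {c l m t : ℕ} (hc : 1 ≤ c) (hl : 2 ≤ l) (hm : 0 < m)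
    (ht : 24 * c * m ^ 2 * Real.log l < t) :
    ((l ^ c + 1 : ℕ) : ℝ) ^ (2 * m) < Real.exp (t / (6 * m)) := by
  have hlc : l ^ c + 1 ≤ l ^ (2 * c) := by
    have : 2 ≤ l ^ c := hl.trans (Nat.le_self_pow (by omega) l)
    rw [mul_comm, pow_mul, sq]; nlinarith
  calc ((l ^ c + 1 : ℕ) : ℝ) ^ (2 * m) ≤ (l : ℝ) ^ (2 * c * (2 * m)) := by
        rw [pow_mul (l : ℝ)]; exact_mod_cast Nat.pow_le_pow_left hlc _
    _ = Real.exp ((2 * c * (2 * m) : ℕ) * Real.log l) := by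
        rw [← Real.log_pow, Real.exp_log (by positivity)]
    _ < Real.exp (t / (6 * m)) := by
        rw [Real.exp_lt_exp, lt_div_iff₀ (by positivity)]
        push_cast; nlinarith

lemma floor_add_one_le_mul_log {c l m : ℕ} (hc : 1 ≤ c) (hl : 3 < l) (hm : 1 ≤ m) (hml : m ≤ l) :
    ((⌊24 * c * m ^ 2 * Real.log l⌋₊ + 1 : ℕ) : ℝ) ≤ 25 * c * l * m * Real.log l := by
  have hc' : (1 : ℝ) ≤ c := by exact_mod_cast hc
  have hl' : (4 : ℝ) ≤ l := by exact_mod_cast hl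
  have hm' : (1 : ℝ) ≤ m := by exact_mod_cast hm
  have hml' : (m : ℝ) ≤ l := by exact_mod_cast hml
  have hlog : 1 ≤ Real.log l := by
    rw [Real.le_log_iff_exp_le (by positivity)]; linarith [Real.exp_one_lt_d9]
  have h1 : 1 ≤ c * l * m * Real.log l := one_le_mul_of_one_le_of_one_le
    (one_le_mul_of_one_le_of_one_le (one_le_mul_of_one_le_of_one_le hc' (by linarith)) hm') hlog
  have h2 : (m : ℝ) ^ 2 ≤ l * m := by
    rw [sq]; exact mul_le_mul_of_nonneg_right hml' (by positivity)
  have h3 := mul_le_mul_of_nonneg_left h2 (show 0 ≤ 24 * c * Real.log l by positivity)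
  push_cast
  linarith [Nat.floor_le (show 0 ≤ 24 * c * m ^ 2 * Real.log l by positivity)]

/-- Core probabilistic-method step at a fixed dyadic scale: for a fixed integer `c ≥ 2`
there is a constant `d > 0` such that for all integers `l > 3` and `1 ≤ m ≤ l` there is a
family `F` of subsets of `{1,…,l^c}` with `|F| ≤ d·l·m·log l` such that for all disjoint
`N_k, N_uk ⊆ {1,…,l^c}` with `⌈m/2⌉ ≤ |N_k| ≤ m` and `|N_uk| ≥ l`, some `S ∈ F`
satisfies `|S ∩ N_k| = 1` and `|S ∩ N_uk| ≥ 1`. -/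
theorem selecting_colliding_dyadic_scale (c : ℕ) (hc : 2 ≤ c) :
    ∃ d : ℝ, 0 < d ∧
      ∀ l m : ℕ, 3 < l → 1 ≤ m → m ≤ l →
        ∃ F : Finset (Finset ℕ),
          (∀ S ∈ F, S ⊆ Finset.Icc 1 (l ^ c)) ∧
          (F.card : ℝ) ≤ d * (l : ℝ) * (m : ℝ) * Real.log (l : ℝ) ∧
          (∀ Nk Nuk : Finset ℕ,
            Nk ⊆ Finset.Icc 1 (l ^ c) → Nuk ⊆ Finset.Icc 1 (l ^ c) →
            Disjoint Nk Nuk → (m + 1) / 2 ≤ Nk.card → Nk.card ≤ m → l ≤ Nuk.card →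
            ∃ S ∈ F, (S ∩ Nk).card = 1 ∧ 1 ≤ (S ∩ Nuk).card) := by
  refine ⟨25 * c, mul_pos (by norm_num) (by exact_mod_cast (by omega : 0 < c)),
    fun l m hl hm hml => ?_⟩
  obtain ⟨F, hFU, hFt, hF⟩ := exists_finset_selectsOneAndHits (Icc 1 (l ^ c))
    (t := ⌊24 * c * m ^ 2 * Real.log l⌋₊ + 1) hm (by
      rw [Nat.card_Icc, Nat.add_sub_cancel]
      exact cast_pow_succ_pow_lt_exp (by omega) (by omega) hm
        (by push_cast; exact Nat.lt_floor_add_one _))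
  refine ⟨F, hFU, (Nat.cast_le.2 hFt).trans (floor_add_one_le_mul_log (by omega) hl hm hml),
    fun Nk Nuk hNk hNuk hdisj hlow hup hNuk_card => ?_⟩
  obtain ⟨S, hS, hSk, hSuk⟩ := hF Nk Nuk hNk hNuk hdisj (card_pos.1 (by omega)) hup (by omega)
  exact ⟨S, hS, hSk, card_pos.2 hSuk⟩
end

section
/- Lower bound on the single-set success probability: for all integers m ≥ 2, x and l with m/2 ≤ x ≤ m and m ≤ l (so x ≥ 1), the real number (x / m) · (1 − 1/m)^{x−1} · (1 − (1 − 1/m)^{l}) is at least 1/(2m). -/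
open Real

/-- Bernoulli gives `(1 - 1/m)^(x-1) ≥ 1 - (x-1)/m`, and `x (m - x + 1) - m = (x - 1)(m - x) ≥ 0`. -/
lemma one_div_le_div_mul_one_sub_one_div_pow {m : ℝ} {x : ℕ} (hx : 1 ≤ x) (hxm : (x : ℝ) ≤ m) :
    1 / m ≤ x / m * (1 - 1 / m) ^ (x - 1) := by
  have hx1 : (1 : ℝ) ≤ x := by exact_mod_cast hx
  have hm : 0 < m := by linarith
  have bernoulli : 1 - ((x : ℝ) - 1) / m ≤ (1 - 1 / m) ^ (x - 1) := by
    have h := one_add_mul_sub_le_pow (a := 1 - 1 / m)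
      (by have : 1 / m ≤ 1 := (div_le_one hm).2 (by linarith); linarith) (x - 1)
    rw [Nat.cast_sub hx, Nat.cast_one] at h
    linarith [show 1 + ((x : ℝ) - 1) * (1 - 1 / m - 1) = 1 - ((x : ℝ) - 1) / m by ring]
  calc 1 / m ≤ x / m * (1 - ((x : ℝ) - 1) / m) := by
        rw [← sub_nonneg]
        have key : x / m * (1 - ((x : ℝ) - 1) / m) - 1 / m = ((x - 1) * (m - x)) / m ^ 2 := by
          field_simp
          ring
        rw [key]
        exact div_nonneg (mul_nonneg (by linarith) (by linarith)) (sq_nonneg m)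
    _ ≤ x / m * (1 - 1 / m) ^ (x - 1) := by gcongr

lemma one_sub_one_div_pow_le_half {m l : ℕ} (hm : 0 < m) (hl : m ≤ l) :
    (1 - 1 / (m : ℝ)) ^ l ≤ 1 / 2 := by
  have hm1 : (1 : ℝ) ≤ m := by exact_mod_cast hm
  have h0 : 0 ≤ 1 - 1 / (m : ℝ) := sub_nonneg.2 ((div_le_one (by linarith)).2 hm1)
  calc (1 - 1 / (m : ℝ)) ^ l ≤ (1 - 1 / (m : ℝ)) ^ m :=
        pow_le_pow_of_le_one h0 (by simp) hl
    _ ≤ exp (-1) := one_sub_div_pow_le_exp_neg hm1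
    _ ≤ 1 / 2 := exp_neg_one_lt_half.le

/-- Lower bound on the single-set success probability: for integers `m ≥ 2`, `x`, `l`
with `m/2 ≤ x ≤ m` and `m ≤ l`, we have
`(x/m)·(1 − 1/m)^(x−1)·(1 − (1 − 1/m)^l) ≥ 1/(2m)`. -/
theorem single_set_success_lower_bound
    (m x l : ℕ) (hm : 2 ≤ m) (hx_lo : (m : ℝ) / 2 ≤ (x : ℝ)) (hx_hi : x ≤ m)
    (hl : m ≤ l) :
    1 / (2 * (m : ℝ)) ≤
      ((x : ℝ) / (m : ℝ)) * (1 - 1 / (m : ℝ)) ^ (x - 1) *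
        (1 - (1 - 1 / (m : ℝ)) ^ l) := by
  have hm2 : (2 : ℝ) ≤ m := by exact_mod_cast hm
  have hx : 1 ≤ x := by exact_mod_cast (show (1 : ℝ) ≤ x by linarith)
  have first_factors :=
    one_div_le_div_mul_one_sub_one_div_pow (m := m) hx (by exact_mod_cast hx_hi)
  have last_factor := one_sub_one_div_pow_le_half (by omega) hl
  calc 1 / (2 * (m : ℝ)) = 1 / m * (1 / 2) := by ring
    _ ≤ _ := mul_le_mul first_factors (by linarith) (by norm_num)
        ((by positivity : (0 : ℝ) ≤ 1 / m).trans first_factors)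
end

section
/- Union-bound failure estimate: fix an integer c ≥ 2. There exists a constant d > 0 (depending only on c) such that for all integers l ≥ m ≥ 4 and every real t ≥ d · l · m · Real.log l, one has m² · (2·e·l^c / m)^{m/2} · (e · l^{c−1})^{l} · (1 − 1/(2m))^{t} < 1. -/
/-!
Each counting factor is at most a power of `l`: `m² ≤ l²`, `2e·l^c/m ≤ l^(c+1)` and
`e·l^(c-1) ≤ l^(c+1)`, so their product is at most `l^(2 + 3(c+1)l/2)`. Since
`log (1 - x) ≤ -x`, the last factor is at most `exp (-t/(2m)) ≤ l^(-d·l/2)`, and the choice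
`d = 3c + 5` leaves the exponent `2 - l < 0`.
-/

open Real

lemma two_mul_exp_one_mul_pow_div_le_pow_succ {l m : ℝ} (c : ℕ) (hl : 2 ≤ l) (hm : 4 ≤ m) :
    2 * exp 1 * l ^ c / m ≤ l ^ (c + 1) := by
  have h2e : 2 * exp 1 ≤ l * m := by nlinarith [exp_one_lt_d9]
  rw [div_le_iff₀ (by positivity), pow_succ]
  calc 2 * exp 1 * l ^ c ≤ l * m * l ^ c := by gcongr
    _ = l ^ c * l * m := by ring

lemma exp_one_mul_pow_sub_one_le_pow_succ {l : ℝ} (c : ℕ) (hl : exp 1 ≤ l) :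
    exp 1 * l ^ (c - 1) ≤ l ^ (c + 1) := by
  have hl1 : 1 ≤ l := le_trans (by linarith [add_one_le_exp (1 : ℝ)]) hl
  rw [pow_succ']
  exact mul_le_mul hl (pow_le_pow_right₀ hl1 (Nat.sub_le c 1)) (by positivity) (by positivity)

lemma log_le_mul_log_of_le_pow {x y : ℝ} {k : ℕ} (hx : 0 < x) (h : x ≤ y ^ k) :
    log x ≤ k * log y :=
  (log_le_log hx h).trans_eq (log_pow y k)

lemma one_sub_one_div_two_mul_pos {m : ℝ} (hm : 1 ≤ m) : 0 < 1 - 1 / (2 * m) := by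
  rw [sub_pos, div_lt_one (by positivity)]
  linarith

/-- The number of choices of `N_k`, times that of `N_uk`, times the probability that all `t`
random subsets fail for a fixed pair. -/
noncomputable def failureBound (c l m : ℕ) (t : ℝ) : ℝ :=
  (m : ℝ) ^ 2 * (2 * exp 1 * (l : ℝ) ^ c / m) ^ ((m : ℝ) / 2) *
    (exp 1 * (l : ℝ) ^ (c - 1)) ^ l * (1 - 1 / (2 * (m : ℝ))) ^ t

lemma failureBound_pos (c : ℕ) {l m : ℕ} (hl : 0 < l) (hm : 0 < m) (t : ℝ) :
    0 < failureBound c l m t :=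
  mul_pos (by positivity)
    (rpow_pos_of_pos (one_sub_one_div_two_mul_pos (by exact_mod_cast hm)) t)

lemma log_failureBound (c : ℕ) {l m : ℕ} (hl : 0 < l) (hm : 0 < m) (t : ℝ) :
    log (failureBound c l m t) =
      2 * log m + m / 2 * log (2 * exp 1 * (l : ℝ) ^ c / m) +
        l * log (exp 1 * (l : ℝ) ^ (c - 1)) + t * log (1 - 1 / (2 * (m : ℝ))) := by
  have hq := one_sub_one_div_two_mul_pos (m := m) (by exact_mod_cast hm)
  rw [failureBound, log_mul (by positivity) (by positivity),
    log_mul (by positivity) (by positivity), log_mul (by positivity) (by positivity),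
    log_pow, log_pow, log_rpow (by positivity), log_rpow hq]
  push_cast
  ring

lemma log_failureBound_le (c : ℕ) {l m : ℕ} (hm : 4 ≤ m) (hml : m ≤ l) {t : ℝ} (ht : 0 ≤ t) :
    log (failureBound c l m t) ≤
      (2 + 3 * (c + 1) * l / 2) * log l - t / (2 * m) := by
  have hm4 : (4 : ℝ) ≤ m := by exact_mod_cast hm
  have hml' : (m : ℝ) ≤ l := by exact_mod_cast hml
  have hm0 : (0 : ℝ) < m := by linarith
  have hl0 : (0 : ℝ) < l := by linarith
  have hL : 0 ≤ log (l : ℝ) := log_nonneg (by linarith)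
  have hlog_m : log (m : ℝ) ≤ log l := log_le_log (by linarith) hml'
  have hlog_known : log (2 * exp 1 * (l : ℝ) ^ c / m) ≤ (c + 1 : ℕ) * log l :=
    log_le_mul_log_of_le_pow (by positivity)
      (two_mul_exp_one_mul_pow_div_le_pow_succ c (by linarith) hm4)
  have hlog_unknown : log (exp 1 * (l : ℝ) ^ (c - 1)) ≤ (c + 1 : ℕ) * log l :=
    log_le_mul_log_of_le_pow (by positivity)
      (exp_one_mul_pow_sub_one_le_pow_succ c (by linarith [exp_one_lt_d9]))
  have hlog_miss : log (1 - 1 / (2 * (m : ℝ))) ≤ -(1 / (2 * m)) := by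
    linarith [log_le_sub_one_of_pos (one_sub_one_div_two_mul_pos (by linarith : (1 : ℝ) ≤ m))]
  rw [log_failureBound c (by omega) (by omega)]
  push_cast at hlog_known hlog_unknown
  have h_known : (m : ℝ) / 2 * log (2 * exp 1 * (l : ℝ) ^ c / m) ≤ l / 2 * ((c + 1) * log l) :=
    calc _ ≤ (m : ℝ) / 2 * ((c + 1) * log l) := by gcongr
      _ ≤ l / 2 * ((c + 1) * log l) := by gcongr
  have h_unknown : (l : ℝ) * log (exp 1 * (l : ℝ) ^ (c - 1)) ≤ l * ((c + 1) * log l) := by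
    gcongr
  have h_miss : t * log (1 - 1 / (2 * (m : ℝ))) ≤ -(t / (2 * m)) := by
    calc _ ≤ t * -(1 / (2 * m)) := by gcongr
      _ = -(t / (2 * m)) := by ring
  linarith

theorem union_bound_failure_estimate_general (c : ℕ) :
    ∃ d : ℝ, 0 < d ∧
      ∀ l m : ℕ, 4 ≤ m → m ≤ l →
        ∀ t : ℝ, d * (l : ℝ) * (m : ℝ) * Real.log (l : ℝ) ≤ t →
          (m : ℝ) ^ 2 *
              (2 * Real.exp 1 * (l : ℝ) ^ c / (m : ℝ)) ^ ((m : ℝ) / 2) *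
              (Real.exp 1 * (l : ℝ) ^ (c - 1)) ^ l *
              (1 - 1 / (2 * (m : ℝ))) ^ t < 1 := by
  refine ⟨3 * c + 5, by positivity, fun l m hm hml t ht => ?_⟩
  have hm4 : (4 : ℝ) ≤ m := by exact_mod_cast hm
  have hl4 : (4 : ℝ) ≤ l := by exact_mod_cast hm.trans hml
  have hL : 0 < log (l : ℝ) := log_pos (by linarith)
  have hgain : (3 * c + 5 : ℝ) * l * log l / 2 ≤ t / (2 * m) := by
    rw [le_div_iff₀ (by positivity)]
    linarith
  change failureBound c l m t < 1
  rw [← log_neg_iff (failureBound_pos c (by omega) (by omega) t)]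
  calc _ ≤ (2 + 3 * (c + 1) * l / 2) * log l - t / (2 * m) :=
        log_failureBound_le c hm hml ((mul_nonneg (by positivity) hL.le).trans ht)
    _ ≤ (2 - l) * log l := by linarith
    _ < 0 := mul_neg_of_neg_of_pos (by linarith) hL

/-- Union-bound failure estimate: for a fixed integer `c ≥ 2` there is a constant `d > 0`
such that for all integers `l ≥ m ≥ 4` and every real `t ≥ d·l·m·log l`,
`m² · (2·e·l^c / m)^(m/2) · (e·l^(c−1))^l · (1 − 1/(2m))^t < 1`. -/
theorem union_bound_failure_estimate (c : ℕ) (hc : 2 ≤ c) :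
    ∃ d : ℝ, 0 < d ∧
      ∀ l m : ℕ, 4 ≤ m → m ≤ l →
        ∀ t : ℝ, d * (l : ℝ) * (m : ℝ) * Real.log (l : ℝ) ≤ t →
          (m : ℝ) ^ 2 *
              (2 * Real.exp 1 * (l : ℝ) ^ c / (m : ℝ)) ^ ((m : ℝ) / 2) *
              (Real.exp 1 * (l : ℝ) ^ (c - 1)) ^ l *
              (1 - 1 / (2 * (m : ℝ))) ^ t < 1 :=
  union_bound_failure_estimate_general c
end
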